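/- arXiv:2210.13178 — 5 statements merged into one kernel-verified Lean document; each statement's English description precedes it below -/
import Mathlib

section
/- For every real θ > 1 there exists a unique m > 0 with tanh(θ·m) = m; moreover the set of all real solutions of the equation x = tanh(θx) is exactly {−m, 0, m}, and θ·(1 − m²) < 1 (equivalently, the derivative of x ↦ x − tanh(θx) at x = m is strictly positive). -/
open Real Set Filter Topology

private lemma myTanhDeriv (x : ℝ) : HasDerivAt Real.tanh (1 / Real.cosh x ^ 2) x := by
  have h := (Real.hasDerivAt_sinh x).div (Real.hasDerivAt_cosh x) (Real.cosh_pos x).ne'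
  have heq : (Real.sinh / Real.cosh) = Real.tanh := by
    funext y; rw [Pi.div_apply, Real.tanh_eq_sinh_div_cosh]
  rw [heq, show Real.cosh x * Real.cosh x - Real.sinh x * Real.sinh x = 1 from by
    nlinarith [Real.cosh_sq_sub_sinh_sq x]] at h
  exact h

private lemma myOneSubTanhSq (x : ℝ) : 1 - Real.tanh x ^ 2 = 1 / Real.cosh x ^ 2 := by
  rw [Real.tanh_eq_sinh_div_cosh]
  have h := Real.cosh_sq_sub_sinh_sq x
  have hc := (Real.cosh_pos x).ne'
  field_simp
  linarith

private lemma myTanhLtOne (x : ℝ) : Real.tanh x < 1 := by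
  rw [Real.tanh_eq_sinh_div_cosh, div_lt_one (Real.cosh_pos x)]
  exact Real.sinh_lt_cosh x

theorem stmt0 (θ : ℝ) (hθ : 1 < θ) :
    ∃ m : ℝ, 0 < m ∧ Real.tanh (θ * m) = m ∧
      (∀ m' : ℝ, 0 < m' → Real.tanh (θ * m') = m' → m' = m) ∧
      {x : ℝ | x = Real.tanh (θ * x)} = {-m, 0, m} ∧
      θ * (1 - m ^ 2) < 1 ∧
      0 < deriv (fun x : ℝ => x - Real.tanh (θ * x)) m := by
  have hθ0 : (0:ℝ) < θ := by linarith
  set f : ℝ → ℝ := fun x => Real.tanh (θ * x) with hfdef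
  set g : ℝ → ℝ := fun x => Real.tanh (θ * x) - x with hgdef
  set g' : ℝ → ℝ := fun x => 1 / Real.cosh (θ * x) ^ 2 * θ - 1 with hg'def
  have hf : ∀ x : ℝ, HasDerivAt f (1 / Real.cosh (θ * x) ^ 2 * θ) x := by
    intro x
    have hlin : HasDerivAt (fun x : ℝ => θ * x) θ x := by
      simpa using (hasDerivAt_id x).const_mul θ
    exact (myTanhDeriv (θ * x)).comp x hlin
  have hg : ∀ x : ℝ, HasDerivAt g (g' x) x := fun x => (hf x).sub (hasDerivAt_id x)
  have hgc : Continuous g := by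
    have : Differentiable ℝ g := fun x => (hg x).differentiableAt
    exact this.continuous
  -- g' strictly antitone on Ici 0
  have hanti : StrictAntiOn g' (Ici 0) := by
    intro a ha b hb hab
    have hcosh : Real.cosh (θ * a) < Real.cosh (θ * b) := by
      rw [Real.cosh_lt_cosh]
      rw [abs_of_nonneg (mul_nonneg hθ0.le ha), abs_of_nonneg (mul_nonneg hθ0.le (le_trans ha hab.le))]
      exact (mul_lt_mul_iff_right₀ hθ0).2 hab
    have h1 : (0:ℝ) < Real.cosh (θ * a) := Real.cosh_pos _
    have h2 : 1 / Real.cosh (θ * b) ^ 2 < 1 / Real.cosh (θ * a) ^ 2 := by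
      apply one_div_lt_one_div_of_lt (by positivity)
      nlinarith
    simp only [hg'def]
    nlinarith
  -- g' is continuous
  have hg'cont : Continuous g' := by
    apply Continuous.sub _ continuous_const
    apply Continuous.mul _ continuous_const
    exact Continuous.div continuous_const
      ((Real.continuous_cosh.comp (continuous_const.mul continuous_id)).pow 2)
      (fun x => by positivity)
  have hg'0 : g' 0 = θ - 1 := by simp [hg'def]
  -- find small δ with 0 < δ < 1/2 and g' δ > 0
  have hev : ∀ᶠ x in 𝓝[>] (0:ℝ), 0 < g' x := by
    apply eventually_nhdsWithin_of_eventually_nhds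
    have hopen : IsOpen {x : ℝ | 0 < g' x} := isOpen_lt continuous_const hg'cont
    have hmem : (0:ℝ) ∈ {x : ℝ | 0 < g' x} := by
      simp only [Set.mem_setOf_eq, hg'0]; linarith
    exact Filter.eventually_of_mem (hopen.mem_nhds hmem) (fun x hx => hx)
  have hev2 : ∀ᶠ x in 𝓝[>] (0:ℝ), x < 1/2 := by
    apply eventually_nhdsWithin_of_eventually_nhds
    exact eventually_lt_nhds (by norm_num)
  have hev3 : ∀ᶠ x in 𝓝[>] (0:ℝ), 0 < x := self_mem_nhdsWithin
  obtain ⟨δ, hδg', hδhalf, hδ0⟩ := (hev.and (hev2.and hev3)).exists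
  -- g is strictly increasing on [0, δ], so g δ > 0
  have hgδ : 0 < g δ := by
    have hmono : StrictMonoOn g (Icc 0 δ) := by
      apply strictMonoOn_of_deriv_pos (convex_Icc 0 δ) hgc.continuousOn
      intro x hx
      rw [interior_Icc] at hx
      rw [(hg x).deriv]
      calc (0:ℝ) < g' δ := hδg'
        _ < g' x := hanti (le_of_lt hx.1) hδ0.le hx.2
    have := hmono ⟨le_refl 0, hδ0.le⟩ ⟨hδ0.le, le_refl δ⟩ hδ0
    simpa [hgdef] using this
  have hg1 : g 1 < 0 := by
    simp only [hgdef, mul_one]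
    linarith [myTanhLtOne θ]
  -- IVT
  have hδ1 : δ ≤ 1 := by linarith
  obtain ⟨m, hmIcc, hgm⟩ : ∃ m ∈ Icc δ 1, g m = 0 := by
    have := intermediate_value_Icc' hδ1 hgc.continuousOn
    have h0 : (0:ℝ) ∈ Icc (g 1) (g δ) := ⟨hg1.le, hgδ.le⟩
    obtain ⟨m, hm, hm0⟩ := this h0
    exact ⟨m, hm, hm0⟩
  have hm0 : 0 < m := lt_of_lt_of_le hδ0 hmIcc.1
  have hfm : Real.tanh (θ * m) = m := by
    have : Real.tanh (θ * m) - m = 0 := hgm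
    linarith
  -- strict concavity of f on Ici 0
  have hconc : StrictConcaveOn ℝ (Ici 0) f := by
    apply StrictAntiOn.strictConcaveOn_of_deriv (convex_Ici 0)
      (fun x _ => ((hf x).differentiableAt.continuousAt).continuousWithinAt)
    rw [interior_Ici]
    intro a ha b hb hab
    rw [(hf a).deriv, (hf b).deriv]
    have := hanti (Set.mem_Ici.2 (le_of_lt (Set.mem_Ioi.1 ha))) (Set.mem_Ici.2 (le_of_lt (Set.mem_Ioi.1 hb))) hab
    simp only [hg'def] at this
    linarith
  have hf0 : f 0 = 0 := by simp [hfdef]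
  -- key1 : 0 < x < m → x < f x
  have key1 : ∀ x : ℝ, 0 < x → x < m → x < f x := by
    intro x hx hxm
    have hb : 0 < x / m := div_pos hx hm0
    have ha : 0 < 1 - x / m := by
      have : x / m < 1 := (div_lt_one hm0).2 hxm
      linarith
    have h := hconc.2 (self_mem_Ici) (le_of_lt hm0 : m ∈ Ici 0) (ne_of_lt hm0) ha hb (by ring)
    rw [smul_eq_mul, smul_eq_mul, smul_eq_mul, smul_eq_mul, hf0] at h
    have hx' : (1 - x / m) * 0 + x / m * m = x := by field_simp; ring
    rw [hx', hfdef] at h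
    simp only [hfm] at h
    calc x = (1 - x / m) * 0 + x / m * m := by field_simp; ring
      _ < f x := by simpa [hfm] using h
  -- key2 : m < x → f x < x
  have key2 : ∀ x : ℝ, m < x → f x < x := by
    intro x hmx
    have hx0 : 0 < x := lt_trans hm0 hmx
    have hb : 0 < m / x := div_pos hm0 hx0
    have ha : 0 < 1 - m / x := by
      have : m / x < 1 := (div_lt_one hx0).2 hmx
      linarith
    have h := hconc.2 (self_mem_Ici) (le_of_lt hx0 : x ∈ Ici 0) (ne_of_lt hx0) ha hb (by ring)
    rw [smul_eq_mul, smul_eq_mul, smul_eq_mul, smul_eq_mul, hf0] at h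
    have hx' : (1 - m / x) * 0 + m / x * x = m := by field_simp; ring
    rw [hx'] at h
    have h' : m / x * f x < m := by
      have : f m = m := hfm
      rw [this] at h; linarith
    rw [div_mul_eq_mul_div, div_lt_iff₀ hx0] at h'
    nlinarith
  -- uniqueness
  have huniq : ∀ m' : ℝ, 0 < m' → Real.tanh (θ * m') = m' → m' = m := by
    intro m' hm' hfm'
    rcases lt_trichotomy m' m with h | h | h
    · exact absurd (key1 m' hm' h) (by simp [hfdef, hfm'])
    · exact h
    · exact absurd (key2 m' h) (by simp [hfdef, hfm'])
  -- the derivative inequality via Rolle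
  have hg0 : g 0 = 0 := by simp [hgdef]
  obtain ⟨c, hc, hgc0⟩ : ∃ c ∈ Ioo 0 m, g' c = 0 := by
    apply exists_hasDerivAt_eq_zero hm0 hgc.continuousOn (by rw [hg0, hgm])
    exact fun x _ => hg x
  have hg'm : g' m < 0 := by
    have := hanti (le_of_lt hc.1) hm0.le hc.2
    rw [hgc0] at this
    exact this
  have hineq : θ * (1 - m ^ 2) < 1 := by
    have h1 : 1 - m ^ 2 = 1 / Real.cosh (θ * m) ^ 2 := by
      have h := myOneSubTanhSq (θ * m); rw [hfm] at h; exact h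
    simp only [hg'def] at hg'm
    rw [h1]; linarith
  refine ⟨m, hm0, hfm, huniq, ?_, hineq, ?_⟩
  · ext x
    simp only [Set.mem_setOf_eq, Set.mem_insert_iff, Set.mem_singleton_iff]
    constructor
    · intro hx
      rcases lt_trichotomy x 0 with h | h | h
      · left
        have hx' : Real.tanh (θ * (-x)) = -x := by
          rw [show θ * (-x) = -(θ * x) by ring, Real.tanh_neg, ← hx]
        have := huniq (-x) (by linarith) hx'
        linarith
      · right; left; exact h
      · right; right; exact huniq x h hx.symm
    · intro hx
      rcases hx with h | h | h
      · rw [h, show θ * (-m) = -(θ * m) by ring, Real.tanh_neg, hfm]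
      · rw [h]; simp
      · rw [h, hfm]
  · have hd : HasDerivAt (fun x : ℝ => x - Real.tanh (θ * x))
        (1 - 1 / Real.cosh (θ * m) ^ 2 * θ) m := (hasDerivAt_id m).sub (hf m)
    rw [hd.deriv]
    have h1 : 1 - m ^ 2 = 1 / Real.cosh (θ * m) ^ 2 := by
      have h := myOneSubTanhSq (θ * m); rw [hfm] at h; exact h
    nlinarith [hineq]
end

section
/- For every real θ with 0 < θ ≤ 1, x = 0 is the unique real solution of the equation x = tanh(θx); moreover the derivative of x ↦ x − tanh(θx) at x = 0 equals 1 − θ, which is strictly positive when 0 < θ < 1 and equals 0 when θ = 1. -/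
/-! Since `|tanh y| < |y|` for `y ≠ 0`, a nonzero solution of `x = tanh (θ x)` with `|θ| ≤ 1`
would give `|x| < |θ x| ≤ |x|`. -/

open Real

namespace Real

theorem hasDerivAt_tanh (x : ℝ) : HasDerivAt tanh (1 / cosh x ^ 2) x := by
  have hquot := (hasDerivAt_sinh x).div (hasDerivAt_cosh x) (cosh_pos x).ne'
  rw [← sq, ← sq, cosh_sq_sub_sinh_sq] at hquot
  exact hquot.congr_of_eventuallyEq (Filter.Eventually.of_forall tanh_eq_sinh_div_cosh)

theorem tanh_pos {x : ℝ} (hx : 0 < x) : 0 < tanh x := by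
  rw [tanh_eq_sinh_div_cosh]
  exact div_pos (sinh_pos_iff.mpr hx) (cosh_pos x)

/-- `x cosh x - sinh x` vanishes at `0` and has derivative `x sinh x > 0` for `x > 0`. -/
theorem sinh_lt_mul_cosh {x : ℝ} (hx : 0 < x) : sinh x < x * cosh x := by
  have hmono : StrictMonoOn (fun y ↦ y * cosh y - sinh y) (Set.Ici 0) := by
    refine strictMonoOn_of_deriv_pos (convex_Ici 0) (by fun_prop) fun y hy ↦ ?_
    rw [interior_Ici, Set.mem_Ioi] at hy
    have hderiv : HasDerivAt (fun y ↦ y * cosh y - sinh y) (1 * cosh y + y * sinh y - cosh y) y :=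
      ((hasDerivAt_id y).mul (hasDerivAt_cosh y)).sub (hasDerivAt_sinh y)
    rw [hderiv.deriv]
    simpa using mul_pos hy (sinh_pos_iff.mpr hy)
  simpa using hmono Set.self_mem_Ici hx.le hx

theorem tanh_lt_self {x : ℝ} (hx : 0 < x) : tanh x < x := by
  rw [tanh_eq_sinh_div_cosh, div_lt_iff₀ (cosh_pos x)]
  exact sinh_lt_mul_cosh hx

theorem abs_tanh_lt_abs {x : ℝ} (hx : x ≠ 0) : |tanh x| < |x| := by
  have hpos : ∀ {y : ℝ}, 0 < y → |tanh y| < y := fun hy ↦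
    abs_lt.mpr ⟨by linarith [tanh_pos hy], tanh_lt_self hy⟩
  rcases hx.lt_or_gt with hx | hx
  · simpa [tanh_neg, abs_of_neg hx] using hpos (neg_pos.mpr hx)
  · simpa [abs_of_pos hx] using hpos hx

theorem eq_tanh_mul_iff {θ x : ℝ} (hθ : |θ| ≤ 1) : x = tanh (θ * x) ↔ x = 0 := by
  refine ⟨fun hfix ↦ ?_, fun hx ↦ by simp [hx]⟩
  by_contra hx
  by_cases hθx : θ * x = 0
  · exact hx (by rwa [hθx, tanh_zero] at hfix)
  · have := abs_tanh_lt_abs hθx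
    rw [← hfix, abs_mul] at this
    nlinarith [abs_nonneg x]

end Real

theorem hasDerivAt_sub_tanh_mul_zero (θ : ℝ) :
    HasDerivAt (fun x ↦ x - tanh (θ * x)) (1 - θ) 0 := by
  have hlin : HasDerivAt (fun x ↦ θ * x) θ 0 := by simpa using (hasDerivAt_id (0 : ℝ)).const_mul θ
  have htanh : HasDerivAt (fun x ↦ tanh (θ * x)) (1 / cosh (θ * 0) ^ 2 * θ) 0 :=
    (hasDerivAt_tanh (θ * 0)).comp 0 hlin
  rw [mul_zero, cosh_zero, one_pow, div_one, one_mul] at htanh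
  exact (hasDerivAt_id' 0).sub htanh

theorem stmt1 (θ : ℝ) (h0 : 0 < θ) (h1 : θ ≤ 1) :
    {x : ℝ | x = Real.tanh (θ * x)} = {0} ∧
    deriv (fun x : ℝ => x - Real.tanh (θ * x)) 0 = 1 - θ ∧
    (θ < 1 → 0 < deriv (fun x : ℝ => x - Real.tanh (θ * x)) 0) ∧
    (θ = 1 → deriv (fun x : ℝ => x - Real.tanh (θ * x)) 0 = 0) := by
  have hderiv := (hasDerivAt_sub_tanh_mul_zero θ).deriv
  have hθ : |θ| ≤ 1 := by rwa [abs_of_pos h0]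
  refine ⟨?_, hderiv, fun h ↦ by rw [hderiv]; linarith, fun h ↦ by rw [hderiv, h, sub_self]⟩
  ext x
  exact eq_tanh_mul_iff hθ
end

section
/- Let n ≥ 1 and let Q be a symmetric n×n real matrix with non-negative entries and zeros on the diagonal. Set a := min over y ∈ {−1,1}ⁿ of yᵀQy and b := max over y ∈ {−1,1}ⁿ of yᵀQy. Then for x ∈ {−1,1}ⁿ, the function θ ↦ (θ/2)·xᵀQx − log( Σ over y ∈ {−1,1}ⁿ of exp((θ/2)·yᵀQy) ) attains its supremum over ℝ at a unique point (i.e., the maximum likelihood estimator exists) if and only if a < xᵀQx < b. -/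
/-!
If `c ≤ min q` (resp. `max q ≤ c`), the log-likelihood `θ ↦ θ c - log ∑_y exp (θ q y)` is
antitone (resp. monotone), so a maximiser is never unique. If `min q < c < max q`, bounding the
log-partition function below by single terms of its sum shows that the log-likelihood tends to
`-∞` at both ends, so it attains its maximum; the maximiser is unique because for non-constant `q`
the log-partition function is strictly midpoint convex, by the strict Cauchy–Schwarz inequality.
-/

noncomputable def spin (b : Bool) : ℝ := if b then 1 else -1

noncomputable def qf {n : ℕ} (Q : Matrix (Fin n) (Fin n) ℝ) (v : Fin n → ℝ) : ℝ :=
  ∑ i, ∑ j, v i * Q i j * v j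

open Finset Filter Real

namespace Finset

variable {ι R : Type*}

theorem sum_sum_mul_sub_mul_sq [CommRing R] (s : Finset ι) (f g : ι → R) :
    ∑ i ∈ s, ∑ j ∈ s, (f i * g j - f j * g i) ^ 2
      = 2 * ((∑ i ∈ s, f i ^ 2) * (∑ i ∈ s, g i ^ 2) - (∑ i ∈ s, f i * g i) ^ 2) := by
  have hswap : ∑ i ∈ s, ∑ j ∈ s, f j ^ 2 * g i ^ 2 = ∑ i ∈ s, ∑ j ∈ s, f i ^ 2 * g j ^ 2 :=
    sum_comm
  have hcross : ∑ i ∈ s, ∑ j ∈ s, 2 * (f i * g j) * (f j * g i)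
      = 2 * ∑ i ∈ s, ∑ j ∈ s, f i * g i * (f j * g j) := by
    simp only [mul_sum]
    exact sum_congr rfl fun i _ => sum_congr rfl fun j _ => by ring
  simp only [sub_sq, mul_pow, sum_add_distrib, sum_sub_distrib, sq (∑ i ∈ s, f i * g i),
    sum_mul_sum, hswap, hcross]
  ring

theorem sum_mul_sq_lt_sq_mul_sq [CommRing R] [LinearOrder R] [IsStrictOrderedRing R]
    (s : Finset ι) (f g : ι → R) {i j : ι} (hi : i ∈ s) (hj : j ∈ s)
    (hij : f i * g j ≠ f j * g i) :
    (∑ k ∈ s, f k * g k) ^ 2 < (∑ k ∈ s, f k ^ 2) * ∑ k ∈ s, g k ^ 2 := by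
  have hpos : 0 < ∑ k ∈ s, ∑ l ∈ s, (f k * g l - f l * g k) ^ 2 :=
    sum_pos' (fun k _ => sum_nonneg fun l _ => sq_nonneg _)
      ⟨i, hi, sum_pos' (fun l _ => sq_nonneg _) ⟨j, hj, sq_pos_of_ne_zero (sub_ne_zero.2 hij)⟩⟩
  rw [sum_sum_mul_sub_mul_sq] at hpos
  linarith

end Finset

theorem Monotone.not_existsUnique_isMaxOn {α β : Type*} [Preorder α] [NoMaxOrder α]
    [Preorder β] {f : α → β} (hf : Monotone f) : ¬∃! a, IsMaxOn f Set.univ a := by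
  rintro ⟨a, ha, huniq⟩
  obtain ⟨b, hab⟩ := exists_gt a
  have hb : IsMaxOn f Set.univ b := fun x hx => (ha hx).trans (hf hab.le)
  exact hab.ne (huniq b hb).symm

theorem Antitone.not_existsUnique_isMaxOn {α β : Type*} [Preorder α] [NoMinOrder α]
    [Preorder β] {f : α → β} (hf : Antitone f) : ¬∃! a, IsMaxOn f Set.univ a :=
  hf.dual_left.not_existsUnique_isMaxOn

section LogPartition

variable {ι : Type*} [Fintype ι]

noncomputable def logPartition (q : ι → ℝ) (θ : ℝ) : ℝ :=
  Real.log (∑ y, Real.exp (θ * q y))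

/-- The log-likelihood of the family `p_θ y ∝ exp (θ q y)` at an observation `y₀` with
`q y₀ = c`. -/
noncomputable def logLikelihood (q : ι → ℝ) (c θ : ℝ) : ℝ :=
  θ * c - logPartition q θ

theorem sum_exp_mul_pos [Nonempty ι] (q : ι → ℝ) (θ : ℝ) : 0 < ∑ y, Real.exp (θ * q y) :=
  sum_pos (fun _ _ => exp_pos _) univ_nonempty

theorem continuous_logPartition [Nonempty ι] (q : ι → ℝ) : Continuous (logPartition q) :=
  Continuous.log (by fun_prop) fun θ => (sum_exp_mul_pos q θ).ne'

theorem mul_le_logPartition (q : ι → ℝ) (θ : ℝ) (y : ι) : θ * q y ≤ logPartition q θ :=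
  have : Nonempty ι := ⟨y⟩
  (le_log_iff_exp_le (sum_exp_mul_pos q θ)).2 <|
    single_le_sum (f := fun w => exp (θ * q w)) (fun _ _ => (exp_pos _).le) (mem_univ y)

theorem logPartition_add_le_logPartition_add [Nonempty ι] {q : ι → ℝ} {s t : ℝ}
    (h : ∀ y, s ≤ t * q y) (θ : ℝ) : logPartition q θ + s ≤ logPartition q (θ + t) := by
  have hZ : exp s * ∑ y, exp (θ * q y) ≤ ∑ y, exp ((θ + t) * q y) := by
    rw [mul_sum]
    gcongr with y
    rw [← exp_add, add_mul]
    exact exp_le_exp.2 (by linarith [h y])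
  have := log_le_log (mul_pos (exp_pos s) (sum_exp_mul_pos q θ)) hZ
  rwa [log_mul (exp_pos s).ne' (sum_exp_mul_pos q θ).ne', log_exp, add_comm] at this

theorem logPartition_midpoint_lt [Nonempty ι] {q : ι → ℝ} {s t : ℝ} (hst : s ≠ t) {y z : ι}
    (hyz : q y ≠ q z) :
    logPartition q ((s + t) / 2) < (logPartition q s + logPartition q t) / 2 := by
  set u : ι → ℝ := fun w => exp (s / 2 * q w)
  set v : ι → ℝ := fun w => exp (t / 2 * q w)
  have huv : ∀ w, u w * v w = exp ((s + t) / 2 * q w) := fun w => by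
    rw [← exp_add]; ring_nf
  have hu : ∀ w, u w ^ 2 = exp (s * q w) := fun w => by
    rw [← exp_nat_mul]; push_cast; ring_nf
  have hv : ∀ w, v w ^ 2 = exp (t * q w) := fun w => by
    rw [← exp_nat_mul]; push_cast; ring_nf
  have hne : u y * v z ≠ u z * v y := by
    simp only [u, v, ← exp_add, ne_eq, exp_eq_exp]
    intro h
    exact mul_ne_zero (sub_ne_zero.2 hst) (sub_ne_zero.2 hyz) (by linear_combination 2 * h)
  have hCS := sum_mul_sq_lt_sq_mul_sq univ u v (mem_univ y) (mem_univ z) hne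
  simp only [huv, hu, hv] at hCS
  have := log_lt_log (pow_pos (sum_exp_mul_pos q _) 2) hCS
  rw [log_pow, log_mul (sum_exp_mul_pos q s).ne' (sum_exp_mul_pos q t).ne'] at this
  simp only [logPartition]
  push_cast at this
  linarith

theorem logLikelihood_le_mul_sub (q : ι → ℝ) (c θ : ℝ) (y : ι) :
    logLikelihood q c θ ≤ θ * (c - q y) := by
  have := mul_le_logPartition q θ y
  rw [logLikelihood]
  linarith

theorem antitone_logLikelihood [Nonempty ι] {q : ι → ℝ} {c : ℝ} (h : ∀ y, c ≤ q y) :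
    Antitone (logLikelihood q c) := by
  intro θ₀ θ₁ hθ
  have := logPartition_add_le_logPartition_add (s := (θ₁ - θ₀) * c)
    (fun y => mul_le_mul_of_nonneg_left (h y) (sub_nonneg.2 hθ)) θ₀
  rw [add_sub_cancel] at this
  simp only [logLikelihood]
  linarith

theorem monotone_logLikelihood [Nonempty ι] {q : ι → ℝ} {c : ℝ} (h : ∀ y, q y ≤ c) :
    Monotone (logLikelihood q c) := by
  intro θ₀ θ₁ hθ
  have := logPartition_add_le_logPartition_add (s := (θ₀ - θ₁) * c)
    (fun y => mul_le_mul_of_nonpos_left (h y) (sub_nonpos.2 hθ)) θ₁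
  rw [add_sub_cancel] at this
  simp only [logLikelihood]
  linarith

theorem exists_isMaxOn_logLikelihood {q : ι → ℝ} {c : ℝ} {y z : ι} (hy : q y < c)
    (hz : c < q z) : ∃ θ₀, IsMaxOn (logLikelihood q c) Set.univ θ₀ := by
  have : Nonempty ι := ⟨y⟩
  have hcont : Continuous (logLikelihood q c) :=
    (continuous_id.mul continuous_const).sub (continuous_logPartition q)
  have hbot : Tendsto (logLikelihood q c) atBot atBot :=
    tendsto_atBot_mono (logLikelihood_le_mul_sub q c · y)
      (tendsto_id.atBot_mul_const (sub_pos.2 hy))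
  have htop : Tendsto (logLikelihood q c) atTop atBot :=
    tendsto_atBot_mono (logLikelihood_le_mul_sub q c · z)
      (tendsto_id.atTop_mul_const_of_neg (sub_neg.2 hz))
  obtain ⟨θ₀, hθ₀⟩ := hcont.exists_forall_ge <| by
    rw [cocompact_eq_atBot_atTop]
    exact hbot.sup htop
  exact ⟨θ₀, fun θ _ => hθ₀ θ⟩

theorem eq_of_isMaxOn_logLikelihood [Nonempty ι] {q : ι → ℝ} {c : ℝ} {y z : ι}
    (hyz : q y ≠ q z) {θ₀ θ₁ : ℝ} (h₀ : IsMaxOn (logLikelihood q c) Set.univ θ₀)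
    (h₁ : IsMaxOn (logLikelihood q c) Set.univ θ₁) : θ₀ = θ₁ := by
  by_contra hne
  have hmid := logPartition_midpoint_lt hne hyz
  have e₀ : logLikelihood q c θ₁ ≤ logLikelihood q c θ₀ := h₀ (Set.mem_univ θ₁)
  have e₁ : logLikelihood q c θ₀ ≤ logLikelihood q c θ₁ := h₁ (Set.mem_univ θ₀)
  have em : logLikelihood q c ((θ₀ + θ₁) / 2) ≤ logLikelihood q c θ₀ := h₀ (Set.mem_univ _)
  simp only [logLikelihood] at e₀ e₁ em
  linarith

theorem existsUnique_isMaxOn_logLikelihood_iff [Nonempty ι] (q : ι → ℝ) (c : ℝ) :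
    (∃! θ₀, IsMaxOn (logLikelihood q c) Set.univ θ₀) ↔ (∃ y, q y < c) ∧ ∃ z, c < q z := by
  constructor
  · intro h
    by_contra hc
    simp only [not_and_or, not_exists, not_lt] at hc
    rcases hc with hc | hc
    · exact (antitone_logLikelihood hc).not_existsUnique_isMaxOn h
    · exact (monotone_logLikelihood hc).not_existsUnique_isMaxOn h
  · rintro ⟨⟨y, hy⟩, ⟨z, hz⟩⟩
    obtain ⟨θ₀, hθ₀⟩ := exists_isMaxOn_logLikelihood hy hz
    exact ⟨θ₀, hθ₀, fun θ₁ hθ₁ => eq_of_isMaxOn_logLikelihood (hy.trans hz).ne hθ₁ hθ₀⟩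

end LogPartition

theorem stmt4_general (n : ℕ) (Q : Matrix (Fin n) (Fin n) ℝ) (x : Fin n → ℝ) :
    (∃! θ₀ : ℝ, IsMaxOn
        (fun θ : ℝ => θ / 2 * qf Q x -
          Real.log (∑ y : Fin n → Bool, Real.exp (θ / 2 * qf Q (fun i => spin (y i)))))
        Set.univ θ₀)
      ↔ (Finset.univ.inf' Finset.univ_nonempty
            (fun y : Fin n → Bool => qf Q (fun i => spin (y i))) < qf Q x ∧
          qf Q x < Finset.univ.sup' Finset.univ_nonempty
            (fun y : Fin n → Bool => qf Q (fun i => spin (y i)))) := by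
  set q : (Fin n → Bool) → ℝ := fun y => qf Q (fun i => spin (y i))
  have hf : (fun θ : ℝ => θ / 2 * qf Q x - Real.log (∑ y, Real.exp (θ / 2 * q y)))
      = logLikelihood (fun y => q y / 2) (qf Q x / 2) := by
    funext θ
    simp only [logLikelihood, logPartition, div_mul_eq_mul_div, mul_div_assoc]
  rw [hf, existsUnique_isMaxOn_logLikelihood_iff, inf'_lt_iff, lt_sup'_iff]
  simp only [mem_univ, true_and, div_lt_div_iff_of_pos_right (two_pos : (0 : ℝ) < 2)]

theorem stmt4 (n : ℕ) (hn : 1 ≤ n) (Q : Matrix (Fin n) (Fin n) ℝ)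
    (hsym : Q.IsSymm) (hpos : ∀ i j, 0 ≤ Q i j) (hdiag : ∀ i, Q i i = 0)
    (x : Fin n → ℝ) (hx : ∀ i, x i = 1 ∨ x i = -1) :
    (∃! θ₀ : ℝ, IsMaxOn
        (fun θ : ℝ => θ / 2 * qf Q x -
          Real.log (∑ y : Fin n → Bool, Real.exp (θ / 2 * qf Q (fun i => spin (y i)))))
        Set.univ θ₀)
      ↔ (Finset.univ.inf' Finset.univ_nonempty
            (fun y : Fin n → Bool => qf Q (fun i => spin (y i))) < qf Q x ∧
          qf Q x < Finset.univ.sup' Finset.univ_nonempty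
            (fun y : Fin n → Bool => qf Q (fun i => spin (y i)))) :=
  stmt4_general n Q x
end

section
/- Fix θ₀ ∈ (0,1) and h ∈ ℝ, and for n large enough that θ_n := θ₀ + h/√n > 0, let μ_n be the probability measure on ℝ with density proportional to exp( −(1/2)nθ_nφ² + n·log cosh(θ_nφ) ). Then the pushforward of μ_n under the map φ ↦ √n·φ converges weakly to the Gaussian distribution N(0, 1/(θ₀ − θ₀²)), and moreover all moments converge to the corresponding moments of N(0, 1/(θ₀ − θ₀²)). -/
open MeasureTheory ProbabilityTheory Filter

open scoped ENNReal NNReal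

noncomputable def phiDensity (n : ℕ) (θ φ : ℝ) : ℝ :=
  Real.exp (-((n : ℝ) * θ * φ ^ 2) / 2 + (n : ℝ) * Real.log (Real.cosh (θ * φ)))

noncomputable def phiUnnorm (n : ℕ) (θ : ℝ) : Measure ℝ :=
  MeasureTheory.volume.withDensity fun φ => ENNReal.ofReal (phiDensity n θ φ)

/-- The probability measure on `ℝ` with density proportional to `phiDensity`. -/
noncomputable def phiMeasure (n : ℕ) (θ : ℝ) : Measure ℝ :=
  (phiUnnorm n θ Set.univ)⁻¹ • phiUnnorm n θ

/-! ### Auxiliary limits -/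

lemma CW.tendsto_sinh_div :
    Tendsto (fun s : ℝ => Real.sinh s / s) (nhdsWithin 0 {0}ᶜ) (nhds 1) := by
  have h : HasDerivAt Real.sinh (Real.cosh 0) 0 := Real.hasDerivAt_sinh 0
  have := hasDerivAt_iff_tendsto_slope.mp h
  simp only [Real.cosh_zero] at this
  refine this.congr' ?_
  filter_upwards [self_mem_nhdsWithin] with s hs
  simp [slope_def_field, Real.sinh_zero]

lemma CW.tendsto_log_one_add_div :
    Tendsto (fun u : ℝ => Real.log (1+u) / u) (nhdsWithin 0 {0}ᶜ) (nhds 1) := by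
  have h : HasDerivAt (fun u : ℝ => Real.log (1+u)) 1 0 := by
    have := ((hasDerivAt_id (0:ℝ)).const_add 1).log (by norm_num)
    simpa using this
  have := hasDerivAt_iff_tendsto_slope.mp h
  refine this.congr' ?_
  filter_upwards [self_mem_nhdsWithin] with s hs
  simp [slope_def_field]

lemma CW.coshSinhEq (s : ℝ) : Real.cosh s = 1 + 2 * Real.sinh (s/2) ^ 2 := by
  have h1 : Real.cosh (2 * (s/2)) = Real.cosh (s/2) ^ 2 + Real.sinh (s/2) ^ 2 :=
    Real.cosh_two_mul _
  have h2 : Real.cosh (s/2) ^ 2 = Real.sinh (s/2) ^ 2 + 1 := Real.cosh_sq _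
  rw [show 2 * (s/2) = s by ring] at h1
  rw [h1, h2]; ring

lemma CW.tendsto_logcosh_div_sq :
    Tendsto (fun s : ℝ => Real.log (Real.cosh s) / s ^ 2) (nhdsWithin 0 {0}ᶜ) (nhds (1/2)) := by
  set u : ℝ → ℝ := fun s => 2 * Real.sinh (s/2) ^ 2 with hu_def
  have hu : Tendsto u (nhdsWithin 0 {0}ᶜ) (nhdsWithin 0 {0}ᶜ) := by
    apply tendsto_nhdsWithin_of_tendsto_nhds_of_eventually_within
    · have : Continuous u := by fun_prop
      have := this.tendsto 0
      simpa [hu_def] using this.mono_left nhdsWithin_le_nhds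
    · filter_upwards [self_mem_nhdsWithin] with s hs
      simp only [Set.mem_compl_iff, Set.mem_singleton_iff] at hs ⊢
      simp only [hu_def]
      intro hcon
      have : Real.sinh (s/2) = 0 := by nlinarith [sq_nonneg (Real.sinh (s/2))]
      rw [Real.sinh_eq_zero] at this
      exact hs (by linarith)
  have hhalf : Tendsto (fun s : ℝ => s / 2) (nhdsWithin 0 {0}ᶜ) (nhdsWithin 0 {0}ᶜ) := by
    apply tendsto_nhdsWithin_of_tendsto_nhds_of_eventually_within
    · have h2 := (continuous_id.div_const (2:ℝ)).tendsto 0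
      simpa using h2.mono_left (nhdsWithin_le_nhds (s := {0}ᶜ))
    · filter_upwards [self_mem_nhdsWithin] with s hs
      simp only [Set.mem_compl_iff, Set.mem_singleton_iff] at hs ⊢
      intro hcon; exact hs (by linarith)
  have T2 : Tendsto (fun s : ℝ => u s / s ^ 2) (nhdsWithin 0 {0}ᶜ) (nhds (1/2)) := by
    have h1 : Tendsto (fun s : ℝ => (Real.sinh (s/2) / (s/2)) ^ 2 / 2) (nhdsWithin 0 {0}ᶜ)
        (nhds (1/2)) := by
      have := ((CW.tendsto_sinh_div.comp hhalf).pow 2).div_const 2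
      simpa using this
    refine h1.congr' ?_
    filter_upwards [self_mem_nhdsWithin] with s hs
    simp only [Set.mem_compl_iff, Set.mem_singleton_iff] at hs
    have : s ≠ 0 := hs
    field_simp [hu_def]
    ring
  have T1 : Tendsto (fun s : ℝ => Real.log (1 + u s) / u s) (nhdsWithin 0 {0}ᶜ) (nhds 1) :=
    CW.tendsto_log_one_add_div.comp hu
  have := T1.mul T2
  rw [one_mul] at this
  refine this.congr' ?_
  filter_upwards [hu.eventually self_mem_nhdsWithin] with s hs
  simp only [Set.mem_compl_iff, Set.mem_singleton_iff] at hs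
  rw [← CW.coshSinhEq, div_mul_div_comm, mul_comm (u s) (s^2), mul_div_mul_right _ _ hs]

/-! ### Properties of the density -/

lemma CW.logcosh_le (t : ℝ) : Real.log (Real.cosh t) ≤ t ^ 2 / 2 := by
  have h1 : Real.cosh t ≤ Real.exp (t ^ 2 / 2) := Real.cosh_le_exp_half_sq t
  have h2 := Real.log_le_log (Real.cosh_pos t) h1
  simpa [Real.log_exp] using h2

lemma CW.phiDensity_pos (n : ℕ) (θ φ : ℝ) : 0 < phiDensity n θ φ := Real.exp_pos _

lemma CW.phiDensity_continuous (n : ℕ) (θ : ℝ) : Continuous (phiDensity n θ) := by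
  apply Real.continuous_exp.comp
  apply Continuous.add
  · fun_prop
  · apply Continuous.mul continuous_const
    apply Continuous.log (by fun_prop)
    intro x
    exact (Real.cosh_pos _).ne'

lemma CW.phiDensity_le (n : ℕ) (θ φ : ℝ) :
    phiDensity n θ φ ≤ Real.exp (-((n : ℝ) * (θ - θ ^ 2) * φ ^ 2) / 2) := by
  apply Real.exp_le_exp.mpr
  have h := CW.logcosh_le (θ * φ)
  have hn : (0:ℝ) ≤ n := Nat.cast_nonneg n
  nlinarith [mul_le_mul_of_nonneg_left h hn]

lemma CW.integrable_phiDensity (n : ℕ) (hn : 1 ≤ n) {θ : ℝ} (hθ : 0 < θ - θ ^ 2) :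
    Integrable (phiDensity n θ) := by
  have hb : (0:ℝ) < (n : ℝ) * (θ - θ ^ 2) / 2 := by
    have : (1:ℝ) ≤ n := by exact_mod_cast hn
    positivity
  apply Integrable.mono' (integrable_exp_neg_mul_sq hb)
    (CW.phiDensity_continuous n θ).aestronglyMeasurable
  filter_upwards with φ
  rw [Real.norm_eq_abs, abs_of_pos (CW.phiDensity_pos n θ φ)]
  have := CW.phiDensity_le n θ φ
  calc phiDensity n θ φ ≤ Real.exp (-((n : ℝ) * (θ - θ ^ 2) * φ ^ 2) / 2) := this
    _ = Real.exp (-((n : ℝ) * (θ - θ ^ 2) / 2) * φ ^ 2) := by ring_nf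

lemma CW.integral_phiUnnorm (n : ℕ) (θ : ℝ) (g : ℝ → ℝ) :
    ∫ φ, g φ ∂(phiUnnorm n θ) = ∫ φ, phiDensity n θ φ * g φ := by
  have hmeas : Measurable fun φ => (phiDensity n θ φ).toNNReal :=
    (CW.phiDensity_continuous n θ).measurable.real_toNNReal
  have : phiUnnorm n θ
      = MeasureTheory.volume.withDensity fun φ => (((phiDensity n θ φ).toNNReal : ℝ≥0) : ℝ≥0∞) :=
    rfl
  rw [this, integral_withDensity_eq_integral_smul hmeas]
  congr 1
  funext φ
  rw [NNReal.smul_def, Real.coe_toNNReal _ (CW.phiDensity_pos n θ φ).le, smul_eq_mul]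

lemma CW.phiUnnorm_univ (n : ℕ) (θ : ℝ) (hint : Integrable (phiDensity n θ)) :
    phiUnnorm n θ Set.univ = ENNReal.ofReal (∫ φ, phiDensity n θ φ) := by
  rw [phiUnnorm, withDensity_apply _ MeasurableSet.univ, Measure.restrict_univ,
    ← MeasureTheory.ofReal_integral_eq_lintegral_ofReal hint]
  filter_upwards with φ using (CW.phiDensity_pos n θ φ).le

/-! ### The rescaled density -/

noncomputable def CW.gn (θ₀ h : ℝ) (n : ℕ) (x : ℝ) : ℝ :=
  phiDensity n (θ₀ + h / Real.sqrt n) (x / Real.sqrt n)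

section Main

variable {θ₀ h : ℝ} (h0 : 0 < θ₀) (h1 : θ₀ < 1)

lemma CW.hb (h0 : 0 < θ₀) (h1 : θ₀ < 1) : 0 < θ₀ - θ₀ ^ 2 := by nlinarith

lemma CW.sqrt_natCast_atTop : Tendsto (fun n : ℕ => Real.sqrt n) atTop atTop := by
  apply tendsto_atTop_atTop.mpr
  intro C
  refine ⟨⌈(max 0 C ^ 2 : ℝ)⌉₊, fun n hn => ?_⟩
  have h1 : (max 0 C ^ 2 : ℝ) ≤ n := (Nat.le_ceil _).trans (by exact_mod_cast hn)
  have := Real.sqrt_le_sqrt h1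
  rw [Real.sqrt_sq (le_max_left 0 C)] at this
  exact (le_max_right 0 C).trans this

lemma CW.theta_tendsto :
    Tendsto (fun n : ℕ => θ₀ + h / Real.sqrt n) atTop (nhds θ₀) := by
  have : Tendsto (fun n : ℕ => h / Real.sqrt n) atTop (nhds 0) :=
    Tendsto.div_atTop tendsto_const_nhds CW.sqrt_natCast_atTop
  simpa using tendsto_const_nhds.add this

/-- The eventual good properties of `θ n`. -/
lemma CW.eventually_good (h0 : 0 < θ₀) (h1 : θ₀ < 1) :
    ∀ᶠ n : ℕ in atTop, 1 ≤ n ∧ 0 < θ₀ + h / Real.sqrt n ∧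
      (θ₀ - θ₀ ^ 2) / 2 ≤ (θ₀ + h / Real.sqrt n) - (θ₀ + h / Real.sqrt n) ^ 2 := by
  have hθ := CW.theta_tendsto (θ₀ := θ₀) (h := h)
  have h2 : Tendsto (fun n : ℕ => (θ₀ + h / Real.sqrt n) - (θ₀ + h / Real.sqrt n) ^ 2)
      atTop (nhds (θ₀ - θ₀ ^ 2)) := hθ.sub (hθ.pow 2)
  have e1 : ∀ᶠ n : ℕ in atTop, 1 ≤ n := eventually_ge_atTop 1
  have e2 : ∀ᶠ n : ℕ in atTop, 0 < θ₀ + h / Real.sqrt n :=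
    hθ.eventually (eventually_gt_nhds h0)
  have e3 : ∀ᶠ n : ℕ in atTop,
      (θ₀ - θ₀ ^ 2) / 2 < (θ₀ + h / Real.sqrt n) - (θ₀ + h / Real.sqrt n) ^ 2 :=
    h2.eventually (eventually_gt_nhds (by linarith [CW.hb h0 h1]))
  filter_upwards [e1, e2, e3] with n hn1 hn2 hn3
  exact ⟨hn1, hn2, hn3.le⟩

lemma CW.gn_formula {n : ℕ} (hn : 1 ≤ n) (x : ℝ) :
    CW.gn θ₀ h n x = Real.exp (-((θ₀ + h / Real.sqrt n) * x ^ 2) / 2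
      + (n : ℝ) * Real.log (Real.cosh ((θ₀ + h / Real.sqrt n) * (x / Real.sqrt n)))) := by
  have hs : (0:ℝ) < Real.sqrt n := Real.sqrt_pos.mpr (by exact_mod_cast hn)
  rw [CW.gn, phiDensity]
  congr 2
  have : Real.sqrt n ^ 2 = (n : ℝ) := Real.sq_sqrt (Nat.cast_nonneg n)
  field_simp
  rw [this]

/-- The pointwise limit of the rescaled density. -/
lemma CW.gn_tendsto (h0 : 0 < θ₀) (h1 : θ₀ < 1) (x : ℝ) :
    Tendsto (fun n : ℕ => CW.gn θ₀ h n x) atTop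
      (nhds (Real.exp (-((θ₀ - θ₀ ^ 2) / 2) * x ^ 2))) := by
  have hθ := CW.theta_tendsto (θ₀ := θ₀) (h := h)
  have key : Tendsto (fun n : ℕ =>
      (n : ℝ) * Real.log (Real.cosh ((θ₀ + h / Real.sqrt n) * (x / Real.sqrt n)))) atTop
      (nhds (θ₀ ^ 2 * x ^ 2 / 2)) := by
    rcases eq_or_ne x 0 with rfl | hx
    · simpa using (tendsto_const_nhds : Tendsto (fun _ : ℕ => (0:ℝ)) atTop (nhds 0))
    · set c : ℕ → ℝ := fun n => (θ₀ + h / Real.sqrt n) * (x / Real.sqrt n) with hc_def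
      have hx0 : Tendsto (fun n : ℕ => x / Real.sqrt n) atTop (nhds 0) :=
        Tendsto.div_atTop tendsto_const_nhds CW.sqrt_natCast_atTop
      have hc : Tendsto c atTop (nhds 0) := by
        have := hθ.mul hx0; simpa [hc_def] using this
      have hcne : ∀ᶠ n : ℕ in atTop, c n ≠ 0 := by
        filter_upwards [CW.eventually_good h0 h1 (h := h)] with n ⟨hn1, hn2, _⟩
        have hs : (0:ℝ) < Real.sqrt n := Real.sqrt_pos.mpr (by exact_mod_cast hn1)
        simp only [hc_def]
        exact mul_ne_zero hn2.ne' (div_ne_zero hx hs.ne')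
      have hcw : Tendsto c atTop (nhdsWithin 0 {0}ᶜ) :=
        tendsto_nhdsWithin_of_tendsto_nhds_of_eventually_within _ hc
          (by filter_upwards [hcne] with n hn using hn)
      have hlc : Tendsto (fun n : ℕ => Real.log (Real.cosh (c n)) / (c n) ^ 2) atTop
          (nhds (1/2)) := CW.tendsto_logcosh_div_sq.comp hcw
      have hnc : Tendsto (fun n : ℕ => (n : ℝ) * (c n) ^ 2) atTop (nhds (θ₀ ^ 2 * x ^ 2)) := by
        have heq : ∀ᶠ n : ℕ in atTop,
            (θ₀ + h / Real.sqrt n) ^ 2 * x ^ 2 = (n : ℝ) * (c n) ^ 2 := by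
          filter_upwards [eventually_ge_atTop 1] with n hn1
          have hs : (0:ℝ) < Real.sqrt n := Real.sqrt_pos.mpr (by exact_mod_cast hn1)
          have hsq2 : Real.sqrt n ^ 2 = (n : ℝ) := Real.sq_sqrt (Nat.cast_nonneg n)
          simp only [hc_def]
          field_simp
          linear_combination (h ^ 2 + 2 * Real.sqrt n * θ₀ * h + Real.sqrt n ^ 2 * θ₀ ^ 2) * hsq2
        exact Tendsto.congr' heq (by simpa using (hθ.pow 2).mul (tendsto_const_nhds (x := x ^ 2)))
      have := hlc.mul hnc
      have heq2 : ∀ᶠ n : ℕ in atTop,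
          Real.log (Real.cosh (c n)) / (c n) ^ 2 * ((n : ℝ) * (c n) ^ 2)
            = (n : ℝ) * Real.log (Real.cosh (c n)) := by
        filter_upwards [hcne] with n hn
        have h2 : (c n) ^ 2 ≠ 0 := pow_ne_zero 2 hn
        field_simp
      have := Tendsto.congr' heq2 this
      convert this using 2
      ring
  have hexp : Tendsto (fun n : ℕ =>
      -((θ₀ + h / Real.sqrt n) * x ^ 2) / 2
        + (n : ℝ) * Real.log (Real.cosh ((θ₀ + h / Real.sqrt n) * (x / Real.sqrt n)))) atTop
      (nhds (-(θ₀ * x ^ 2) / 2 + θ₀ ^ 2 * x ^ 2 / 2)) := by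
    exact Tendsto.add (by exact (((hθ.mul tendsto_const_nhds).neg).div_const 2)) key
  have hval : Real.exp (-(θ₀ * x ^ 2) / 2 + θ₀ ^ 2 * x ^ 2 / 2)
      = Real.exp (-((θ₀ - θ₀ ^ 2) / 2) * x ^ 2) := by ring_nf
  have hT := (Real.continuous_exp.tendsto _).comp hexp
  rw [hval] at hT
  refine hT.congr' ?_
  filter_upwards [eventually_ge_atTop 1] with n hn
  simp only [Function.comp_apply]
  rw [CW.gn_formula hn]

lemma CW.gn_continuous (θ₀ h : ℝ) (n : ℕ) : Continuous (CW.gn θ₀ h n) := by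
  exact (CW.phiDensity_continuous n _).comp (continuous_id.div_const _)

lemma CW.gn_nonneg (θ₀ h : ℝ) (n : ℕ) (x : ℝ) : 0 ≤ CW.gn θ₀ h n x :=
  (CW.phiDensity_pos _ _ _).le

lemma CW.gn_le {n : ℕ} (hn1 : 1 ≤ n)
    (hn3 : (θ₀ - θ₀ ^ 2) / 2 ≤ (θ₀ + h / Real.sqrt n) - (θ₀ + h / Real.sqrt n) ^ 2) (x : ℝ) :
    CW.gn θ₀ h n x ≤ Real.exp (-((θ₀ - θ₀ ^ 2) / 4) * x ^ 2) := by
  have hs : (0:ℝ) < Real.sqrt n := Real.sqrt_pos.mpr (by exact_mod_cast hn1)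
  have hsq2 : Real.sqrt n ^ 2 = (n : ℝ) := Real.sq_sqrt (Nat.cast_nonneg n)
  set θ := θ₀ + h / Real.sqrt n
  refine (CW.phiDensity_le n θ (x / Real.sqrt n)).trans ?_
  apply Real.exp_le_exp.mpr
  have hx2 : (n : ℝ) * (x / Real.sqrt n) ^ 2 = x ^ 2 := by
    rw [div_pow, hsq2]
    field_simp
  have : (n : ℝ) * (θ - θ ^ 2) * (x / Real.sqrt n) ^ 2 = (θ - θ ^ 2) * x ^ 2 := by
    rw [mul_comm ((n:ℝ)) (θ - θ ^ 2), mul_assoc, hx2]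
  rw [this]
  nlinarith [sq_nonneg x]

lemma CW.conv (h0 : 0 < θ₀) (h1 : θ₀ < 1) (f : ℝ → ℝ) (hf : Continuous f)
    (hint : Integrable (fun x => |f x| * Real.exp (-((θ₀ - θ₀ ^ 2) / 4) * x ^ 2))) :
    Tendsto (fun n : ℕ => ∫ x, CW.gn θ₀ h n x * f x) atTop
      (nhds (∫ x, Real.exp (-((θ₀ - θ₀ ^ 2) / 2) * x ^ 2) * f x)) := by
  apply tendsto_integral_filter_of_dominated_convergence
      (fun x => |f x| * Real.exp (-((θ₀ - θ₀ ^ 2) / 4) * x ^ 2))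
  · filter_upwards with n
    exact ((CW.gn_continuous θ₀ h n).mul hf).aestronglyMeasurable
  · filter_upwards [CW.eventually_good h0 h1 (h := h)] with n hn
    obtain ⟨hn1, hn2, hn3⟩ := hn
    filter_upwards with x
    rw [Real.norm_eq_abs, abs_mul, abs_of_nonneg (CW.gn_nonneg θ₀ h n x), mul_comm]
    exact mul_le_mul_of_nonneg_left (CW.gn_le hn1 hn3 x) (abs_nonneg _)
  · exact hint
  · filter_upwards with x
    exact (CW.gn_tendsto h0 h1 x).mul tendsto_const_nhds

lemma CW.key_eq (h0 : 0 < θ₀) (h1 : θ₀ < 1) {n : ℕ} (hn1 : 1 ≤ n)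
    (hn2 : 0 < θ₀ + h / Real.sqrt n)
    (hn3 : (θ₀ - θ₀ ^ 2) / 2 ≤ (θ₀ + h / Real.sqrt n) - (θ₀ + h / Real.sqrt n) ^ 2)
    (f : ℝ → ℝ) :
    ∫ φ, f (Real.sqrt n * φ) ∂ phiMeasure n (θ₀ + h / Real.sqrt n)
      = (∫ x, CW.gn θ₀ h n x * f x) / (∫ x, CW.gn θ₀ h n x) := by
  have hs : (0:ℝ) < Real.sqrt n := Real.sqrt_pos.mpr (by exact_mod_cast hn1)
  set θ := θ₀ + h / Real.sqrt n with hθ_def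
  have hθpos : 0 < θ - θ ^ 2 := lt_of_lt_of_le (by linarith [CW.hb h0 h1]) hn3
  have hI : Integrable (phiDensity n θ) := CW.integrable_phiDensity n hn1 hθpos
  have hIpos : 0 < ∫ φ, phiDensity n θ φ := by
    simp only [phiDensity]
    exact integral_exp_pos hI
  -- the substituted identities
  have hgn_eq : ∀ φ : ℝ, CW.gn θ₀ h n (Real.sqrt n * φ) = phiDensity n θ φ := by
    intro φ
    rw [CW.gn, mul_comm, mul_div_assoc, div_self hs.ne', mul_one]
  have hcv1 : ∫ φ, phiDensity n θ φ * f (Real.sqrt n * φ)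
      = (Real.sqrt n)⁻¹ * ∫ x, CW.gn θ₀ h n x * f x := by
    have h2 : (∫ φ, CW.gn θ₀ h n (Real.sqrt n * φ) * f (Real.sqrt n * φ))
        = |(Real.sqrt n)⁻¹| • ∫ x, CW.gn θ₀ h n x * f x :=
      MeasureTheory.Measure.integral_comp_mul_left (fun x => CW.gn θ₀ h n x * f x) (Real.sqrt n)
    simp only [← hgn_eq]
    rw [h2, abs_of_nonneg (inv_nonneg.mpr hs.le), smul_eq_mul]
  have hcv2 : ∫ φ, phiDensity n θ φ = (Real.sqrt n)⁻¹ * ∫ x, CW.gn θ₀ h n x := by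
    have h2 : (∫ φ, CW.gn θ₀ h n (Real.sqrt n * φ))
        = |(Real.sqrt n)⁻¹| • ∫ x, CW.gn θ₀ h n x :=
      MeasureTheory.Measure.integral_comp_mul_left (fun x => CW.gn θ₀ h n x) (Real.sqrt n)
    simp only [← hgn_eq]
    rw [h2, abs_of_nonneg (inv_nonneg.mpr hs.le), smul_eq_mul]
  rw [phiMeasure, integral_smul_measure, CW.phiUnnorm_univ n θ hI, CW.integral_phiUnnorm,
    ENNReal.toReal_inv, ENNReal.toReal_ofReal hIpos.le, hcv1, smul_eq_mul, hcv2]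
  rw [mul_inv, inv_inv]
  have hgnpos : 0 < ∫ x, CW.gn θ₀ h n x := by
    have := hcv2
    nlinarith [hIpos, inv_pos.mpr hs]
  field_simp

lemma CW.integral_withDensity_ofReal {ρ : ℝ → ℝ} (hρ : Measurable ρ) (hρ0 : ∀ x, 0 ≤ ρ x)
    (g : ℝ → ℝ) :
    ∫ x, g x ∂(MeasureTheory.volume.withDensity fun x => ENNReal.ofReal (ρ x))
      = ∫ x, ρ x * g x := by
  have hmeas : Measurable fun x => (ρ x).toNNReal := hρ.real_toNNReal
  have : (MeasureTheory.volume.withDensity fun x => ENNReal.ofReal (ρ x))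
      = MeasureTheory.volume.withDensity fun x => (((ρ x).toNNReal : ℝ≥0) : ℝ≥0∞) := rfl
  rw [this, integral_withDensity_eq_integral_smul hmeas]
  congr 1
  funext x
  rw [NNReal.smul_def, Real.coe_toNNReal _ (hρ0 x), smul_eq_mul]

lemma CW.gauss_eq {b : ℝ} (hb : 0 < b) (f : ℝ → ℝ) :
    ∫ x, f x ∂ gaussianReal 0 (Real.toNNReal (1 / b))
      = (∫ x, Real.exp (-(b / 2) * x ^ 2) * f x) / (∫ x, Real.exp (-(b / 2) * x ^ 2)) := by
  have hv : Real.toNNReal (1 / b) ≠ 0 := by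
    rw [ne_eq, Real.toNNReal_eq_zero, not_le]
    positivity
  have hvr : ((Real.toNNReal (1 / b) : ℝ≥0) : ℝ) = 1 / b := Real.coe_toNNReal _ (by positivity)
  have hpdf : ∀ x : ℝ, gaussianPDFReal 0 (Real.toNNReal (1 / b)) x
      = (Real.sqrt (Real.pi / (b / 2)))⁻¹ * Real.exp (-(b / 2) * x ^ 2) := by
    intro x
    rw [gaussianPDFReal, hvr]
    have h1 : 2 * Real.pi * (1 / b) = Real.pi / (b / 2) := by field_simp
    have h2 : -(x - 0) ^ 2 / (2 * (1 / b)) = -(b / 2) * x ^ 2 := by field_simp; ring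
    rw [h1, h2]
  have hden : (∫ x, Real.exp (-(b / 2) * x ^ 2)) = Real.sqrt (Real.pi / (b / 2)) :=
    integral_gaussian (b / 2)
  rw [gaussianReal_of_var_ne_zero _ hv]
  have : gaussianPDF 0 (Real.toNNReal (1 / b))
      = fun x => ENNReal.ofReal (gaussianPDFReal 0 (Real.toNNReal (1 / b)) x) := rfl
  rw [this, CW.integral_withDensity_ofReal (measurable_gaussianPDFReal 0 _)
    (gaussianPDFReal_nonneg 0 _)]
  simp_rw [hpdf]
  rw [show (fun x => (Real.sqrt (Real.pi / (b / 2)))⁻¹ * Real.exp (-(b / 2) * x ^ 2) * f x)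
      = (fun x => (Real.sqrt (Real.pi / (b / 2)))⁻¹ * (Real.exp (-(b / 2) * x ^ 2) * f x))
    from by funext x; ring]
  rw [integral_const_mul, hden]
  exact (mul_comm _ _).trans (div_eq_mul_inv _ _).symm

theorem stmt8 (θ₀ h : ℝ) (h0 : 0 < θ₀) (h1 : θ₀ < 1) :
    (∀ f : BoundedContinuousFunction ℝ ℝ,
      Tendsto (fun n : ℕ =>
          ∫ φ, f (Real.sqrt (n : ℝ) * φ) ∂ phiMeasure n (θ₀ + h / Real.sqrt (n : ℝ)))
        atTop
        (nhds (∫ x, f x ∂ gaussianReal 0 (Real.toNNReal (1 / (θ₀ - θ₀ ^ 2)))))) ∧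
    (∀ k : ℕ,
      Tendsto (fun n : ℕ =>
          ∫ φ, (Real.sqrt (n : ℝ) * φ) ^ k ∂ phiMeasure n (θ₀ + h / Real.sqrt (n : ℝ)))
        atTop
        (nhds (∫ x, x ^ k ∂ gaussianReal 0 (Real.toNNReal (1 / (θ₀ - θ₀ ^ 2)))))) := by
  have hb : 0 < θ₀ - θ₀ ^ 2 := CW.hb h0 h1
  have hc : 0 < (θ₀ - θ₀ ^ 2) / 4 := by linarith
  have main : ∀ f : ℝ → ℝ, Continuous f →
      Integrable (fun x => |f x| * Real.exp (-((θ₀ - θ₀ ^ 2) / 4) * x ^ 2)) →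
      Tendsto (fun n : ℕ =>
          ∫ φ, f (Real.sqrt (n : ℝ) * φ) ∂ phiMeasure n (θ₀ + h / Real.sqrt (n : ℝ)))
        atTop
        (nhds (∫ x, f x ∂ gaussianReal 0 (Real.toNNReal (1 / (θ₀ - θ₀ ^ 2))))) := by
    intro f hf hint
    have hnum := CW.conv (h := h) h0 h1 f hf hint
    have hden := CW.conv (h := h) h0 h1 (fun _ => (1:ℝ)) continuous_const
      (by simpa using (integrable_exp_neg_mul_sq hc))
    simp only [mul_one] at hden
    have hdenpos : 0 < ∫ x, Real.exp (-((θ₀ - θ₀ ^ 2) / 2) * x ^ 2) := by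
      rw [integral_gaussian]
      apply Real.sqrt_pos.mpr
      positivity
    have hratio := hnum.div hden hdenpos.ne'
    rw [CW.gauss_eq hb f]
    refine Tendsto.congr' ?_ hratio
    filter_upwards [CW.eventually_good h0 h1 (h := h)] with n hn
    obtain ⟨hn1, hn2, hn3⟩ := hn
    exact (CW.key_eq h0 h1 hn1 hn2 hn3 f).symm
  constructor
  · intro f
    apply main f f.continuous
    apply Integrable.mono' ((integrable_exp_neg_mul_sq hc).const_mul ‖f‖)
    · exact (f.continuous.abs.mul (by fun_prop)).aestronglyMeasurable
    · filter_upwards with x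
      rw [Real.norm_eq_abs, abs_mul, abs_abs, abs_of_nonneg (Real.exp_pos _).le]
      apply mul_le_mul_of_nonneg_right _ (Real.exp_pos _).le
      have hfx := f.norm_coe_le_norm x
      rw [Real.norm_eq_abs] at hfx
      exact hfx
  · intro k
    apply main _ (continuous_pow k)
    have h2k : Integrable fun x : ℝ => x ^ (2 * k) * Real.exp (-((θ₀ - θ₀ ^ 2) / 4) * x ^ 2) := by
      have hlt : (-1 : ℝ) < ((2 * k : ℕ) : ℝ) :=
        lt_of_lt_of_le (by norm_num) (Nat.cast_nonneg _)
      have hI := integrable_rpow_mul_exp_neg_mul_sq hc (s := ((2 * k : ℕ) : ℝ)) hlt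
      have heq : (fun x : ℝ => x ^ (2 * k) * Real.exp (-((θ₀ - θ₀ ^ 2) / 4) * x ^ 2))
          = fun x : ℝ => x ^ (((2 * k : ℕ)) : ℝ) * Real.exp (-((θ₀ - θ₀ ^ 2) / 4) * x ^ 2) := by
        funext x; rw [Real.rpow_natCast]
      rw [heq]; exact hI
    have hbnd : ∀ x : ℝ, |x ^ k| ≤ 1 + x ^ (2 * k) := by
      intro x
      have h3 : (0:ℝ) ≤ x ^ (2 * k) := by rw [pow_mul]; positivity
      have h4 : |x| ^ (2 * k) = x ^ (2 * k) := by rw [pow_mul, pow_mul, sq_abs]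
      rcases le_total (|x|) 1 with hx | hx
      · have : |x| ^ k ≤ 1 := pow_le_one₀ (abs_nonneg x) hx
        rw [abs_pow]; linarith
      · have : |x| ^ k ≤ |x| ^ (2 * k) := pow_le_pow_right₀ hx (by omega)
        rw [abs_pow]; linarith
    apply Integrable.mono' ((integrable_exp_neg_mul_sq hc).add h2k)
    · exact ((continuous_pow k).abs.mul (by fun_prop)).aestronglyMeasurable
    · filter_upwards with x
      rw [Real.norm_eq_abs, abs_mul, abs_abs, abs_of_nonneg (Real.exp_pos _).le]
      have hmm := mul_le_mul_of_nonneg_right (hbnd x)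
        (Real.exp_pos (-((θ₀ - θ₀ ^ 2) / 4) * x ^ 2)).le
      refine hmm.trans_eq ?_
      simp only [Pi.add_apply]
      ring
end Main
end

section
/- Fix h ∈ ℝ, and for n large enough that θ_n := 1 + h/√n > 0, let μ_n be the probability measure on ℝ with density proportional to exp( −(1/2)nθ_nφ² + n·log cosh(θ_nφ) ). Then the pushforward of μ_n under the map φ ↦ n^{1/4}·φ converges weakly to the distribution H_h on ℝ with density p_h(u) = exp( −u⁴/12 + hu²/2 − F(h) ), and moreover all moments converge to the corresponding moments of H_h. -/
open MeasureTheory ProbabilityTheory Filter Real Topology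
open scoped ENNReal NNReal


open MeasureTheory ProbabilityTheory Filter

/-- `F(h) = log ∫ exp(-u⁴/12 + h u²/2) du`. -/
noncomputable def Fcrit (h : ℝ) : ℝ :=
  Real.log (∫ u : ℝ, Real.exp (-(u ^ 4) / 12 + h * u ^ 2 / 2))

/-- The probability distribution `H_h` with density `exp(-u⁴/12 + h u²/2 - F(h))`. -/
noncomputable def Hmeasure (h : ℝ) : Measure ℝ :=
  MeasureTheory.volume.withDensity fun u =>
    ENNReal.ofReal (Real.exp (-(u ^ 4) / 12 + h * u ^ 2 / 2 - Fcrit h))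


section Stmt9Calc

lemma nonneg_of_deriv (a : ℝ) {f f' : ℝ → ℝ} (hd : ∀ x, HasDerivAt f (f' x) x)
    (h0 : 0 ≤ f a) (h' : ∀ x, a ≤ x → 0 ≤ f' x) {x : ℝ} (hx : a ≤ x) : 0 ≤ f x := by
  have hmono : MonotoneOn f (Set.Ici a) := by
    apply monotoneOn_of_deriv_nonneg (convex_Ici a)
      (fun y _ => (hd y).continuousAt.continuousWithinAt)
      (fun y _ => (hd y).differentiableAt.differentiableWithinAt)
    intro y hy
    rw [(hd y).deriv]
    rw [interior_Ici] at hy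
    exact h' y hy.le
  exact h0.trans (hmono (by simp) hx hx)

lemma sinh_le_mul_cosh {x : ℝ} (hx : 0 ≤ x) : sinh x ≤ x * cosh x := by
  have key : 0 ≤ x * cosh x - sinh x := by
    apply nonneg_of_deriv 0 (f' := fun x => x * sinh x) ?_ (by simp) ?_ hx
    · intro y
      have : HasDerivAt (fun x : ℝ => x * cosh x - sinh x)
          (1 * cosh y + y * sinh y - cosh y) y :=
        ((hasDerivAt_id y).mul (Real.hasDerivAt_cosh y)).sub (Real.hasDerivAt_sinh y)
      convert this using 1; ring
    · intro y hy
      exact mul_nonneg hy (Real.sinh_nonneg_iff.mpr hy)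
  linarith

lemma mul_cosh_le_sinh {x : ℝ} (hx : 0 ≤ x) : (x - x^3/3) * cosh x ≤ sinh x := by
  have key : 0 ≤ sinh x - (x - x^3/3) * cosh x := by
    apply nonneg_of_deriv 0 (f' := fun x => x^2 * cosh x - (x - x^3/3) * sinh x) ?_ (by simp) ?_ hx
    · intro y
      have : HasDerivAt (fun x : ℝ => sinh x - (x - x^3/3) * cosh x)
          (cosh y - ((1 - 3*y^2/3) * cosh y + (y - y^3/3) * sinh y)) y := by
        exact (Real.hasDerivAt_sinh y).sub
          ((((hasDerivAt_id y).sub (((hasDerivAt_pow 3 y)).div_const 3)).mul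
            (Real.hasDerivAt_cosh y)))
      convert this using 1; ring
    · intro y hy
      have h1 := sinh_le_mul_cosh hy
      have h2 := Real.sinh_nonneg_iff.mpr hy
      have h3 := (Real.cosh_pos y).le
      rcases le_total (y - y^3/3) 0 with hc | hc
      · nlinarith
      · nlinarith [mul_le_mul_of_nonneg_left h1 hc, mul_nonneg (mul_nonneg hy hy) h3,
          mul_le_mul_of_nonneg_right (show y - y^3/3 ≤ y by nlinarith [pow_nonneg hy 3]) (mul_nonneg hy h3)]
  linarith

lemma sinh_le_quintic_cosh {x : ℝ} (hx : 0 ≤ x) :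
    sinh x ≤ (x - x^3/3 + 2*x^5/15) * cosh x := by
  have key : 0 ≤ (x - x^3/3 + 2*x^5/15) * cosh x - sinh x := by
    apply nonneg_of_deriv 0
      (f' := fun x => (2*x^4/3 - x^2) * cosh x + (x - x^3/3 + 2*x^5/15) * sinh x) ?_ (by simp) ?_ hx
    · intro y
      have : HasDerivAt (fun x : ℝ => (x - x^3/3 + 2*x^5/15) * cosh x - sinh x)
          (((1 - 3*y^2/3 + 2*(5*y^4)/15) * cosh y + (y - y^3/3 + 2*y^5/15) * sinh y) - cosh y) y := by
        exact ((((hasDerivAt_id y).sub ((hasDerivAt_pow 3 y).div_const 3)).add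
          (((hasDerivAt_pow 5 y).const_mul 2).div_const 15)).mul (Real.hasDerivAt_cosh y)).sub
          (Real.hasDerivAt_sinh y)
      convert this using 1; ring
    · intro y hy
      have h2 := Real.sinh_nonneg_iff.mpr hy
      have h3 := (Real.cosh_pos y).le
      have hp : 0 ≤ y - y^3/3 + 2*y^5/15 := by nlinarith [sq_nonneg (y^2 - 5/2), sq_nonneg y]
      rcases le_total (y^2) (3/2) with hc | hc
      · have hy3 : 0 ≤ y - y^3/3 := by nlinarith
        have h4 := mul_cosh_le_sinh hy
        have := mul_le_mul_of_nonneg_left h4 hp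
        nlinarith [mul_nonneg (mul_nonneg hy3 hy3) h3, sq_nonneg y,
          mul_nonneg (mul_nonneg (mul_nonneg hy hy) (mul_nonneg (mul_nonneg (mul_nonneg hy hy) hy) hy)) h3]
      · have : 0 ≤ 2*y^4/3 - y^2 := by nlinarith
        nlinarith [mul_nonneg hp h2, mul_nonneg this h3]
  linarith


lemma hasDerivAt_logcosh (x : ℝ) :
    HasDerivAt (fun x : ℝ => log (cosh x)) (sinh x / cosh x) x := by
  simpa [Real.deriv_cosh] using (Real.hasDerivAt_cosh x).log (Real.cosh_pos x).ne'

lemma logcosh_even (x : ℝ) : log (cosh (-x)) = log (cosh x) := by rw [Real.cosh_neg]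

lemma logcosh_le_sq_half (x : ℝ) : log (cosh x) ≤ x^2/2 := by
  have main : ∀ y : ℝ, 0 ≤ y → log (cosh y) ≤ y^2/2 := by
    intro y hy
    have key : 0 ≤ y^2/2 - log (cosh y) := by
      apply nonneg_of_deriv 0 (f' := fun x => x - sinh x / cosh x) ?_ (by simp) ?_ hy
      · intro z
        have : HasDerivAt (fun x : ℝ => x^2/2 - log (cosh x)) (2*z^1/2 - sinh z / cosh z) z :=
          ((hasDerivAt_pow 2 z).div_const 2).sub (hasDerivAt_logcosh z)
        convert this using 1; ring
      · intro z hz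
        have := sinh_le_mul_cosh hz
        have hc := Real.cosh_pos z
        rw [sub_nonneg, div_le_iff₀ hc]
        linarith
    linarith
  rcases le_total 0 x with hx | hx
  · exact main x hx
  · have := main (-x) (by linarith)
    rw [logcosh_even] at this
    calc log (cosh x) ≤ (-x)^2/2 := this
    _ = x^2/2 := by ring

lemma sq_quartic_le_logcosh (x : ℝ) : x^2/2 - x^4/12 ≤ log (cosh x) := by
  have main : ∀ y : ℝ, 0 ≤ y → y^2/2 - y^4/12 ≤ log (cosh y) := by
    intro y hy
    have key : 0 ≤ log (cosh y) - (y^2/2 - y^4/12) := by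
      apply nonneg_of_deriv 0 (f' := fun x => sinh x / cosh x - (x - x^3/3)) ?_ (by simp) ?_ hy
      · intro z
        have : HasDerivAt (fun x : ℝ => log (cosh x) - (x^2/2 - x^4/12))
            (sinh z / cosh z - (2*z^1/2 - 4*z^3/12)) z :=
          (hasDerivAt_logcosh z).sub (((hasDerivAt_pow 2 z).div_const 2).sub
            ((hasDerivAt_pow 4 z).div_const 12))
        convert this using 1; ring
      · intro z hz
        have := mul_cosh_le_sinh hz
        have hc := Real.cosh_pos z
        rw [sub_nonneg, le_div_iff₀ hc]
        linarith
    linarith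
  rcases le_total 0 x with hx | hx
  · exact main x hx
  · have := main (-x) (by linarith)
    rw [logcosh_even] at this
    nlinarith [this]

lemma logcosh_le_sextic (x : ℝ) : log (cosh x) ≤ x^2/2 - x^4/12 + x^6/45 := by
  have main : ∀ y : ℝ, 0 ≤ y → log (cosh y) ≤ y^2/2 - y^4/12 + y^6/45 := by
    intro y hy
    have key : 0 ≤ (y^2/2 - y^4/12 + y^6/45) - log (cosh y) := by
      apply nonneg_of_deriv 0
        (f' := fun x => (x - x^3/3 + 2*x^5/15) - sinh x / cosh x) ?_ (by simp) ?_ hy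
      · intro z
        have : HasDerivAt (fun x : ℝ => (x^2/2 - x^4/12 + x^6/45) - log (cosh x))
            (((2*z^1/2 - 4*z^3/12) + 6*z^5/45) - sinh z / cosh z) z :=
          ((((hasDerivAt_pow 2 z).div_const 2).sub ((hasDerivAt_pow 4 z).div_const 12)).add
            ((hasDerivAt_pow 6 z).div_const 45)).sub (hasDerivAt_logcosh z)
        convert this using 1; ring
      · intro z hz
        have := sinh_le_quintic_cosh hz
        have hc := Real.cosh_pos z
        rw [sub_nonneg, div_le_iff₀ hc]
        linarith
    linarith
  rcases le_total 0 x with hx | hx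
  · exact main x hx
  · have := main (-x) (by linarith)
    rw [logcosh_even] at this
    nlinarith [this]


lemma exp_three_lt : Real.exp 3 < 24 := by
  have h1 : Real.exp 3 = Real.exp 1 ^ (3 : ℕ) := by
    rw [← Real.exp_nat_mul]; norm_num
  rw [h1]
  calc Real.exp 1 ^ (3:ℕ) < 2.7182818286 ^ (3:ℕ) := by
        exact pow_lt_pow_left₀ Real.exp_one_lt_d9 (Real.exp_pos 1).le (by norm_num)
  _ < 24 := by norm_num

lemma sinh_le_numeric {x : ℝ} (hx : 1 ≤ x) : sinh x ≤ 0.94 * x * cosh x := by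
  rcases le_total x 1.5 with hc | hc
  · have h24 : Real.exp (2*x) < 24 := by
      calc Real.exp (2*x) ≤ Real.exp 3 := Real.exp_le_exp.mpr (by linarith)
      _ < 24 := exp_three_lt
    have key : sinh x ≤ 0.94 * cosh x := by
      rw [Real.sinh_eq, Real.cosh_eq]
      have he : Real.exp (-x) = (Real.exp x)⁻¹ := Real.exp_neg x
      have hp : 0 < Real.exp x := Real.exp_pos x
      have h2 : Real.exp x * Real.exp x < 24 := by
        rw [← Real.exp_add] ; convert h24 using 2; ring
      rw [he]
      nlinarith [inv_pos.mpr hp, mul_inv_cancel₀ hp.ne', mul_pos (inv_pos.mpr hp) (inv_pos.mpr hp)]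
    calc sinh x ≤ 0.94 * cosh x := key
    _ ≤ 0.94 * x * cosh x := by nlinarith [Real.cosh_pos x, hx]
  · have h1 : sinh x ≤ cosh x := (Real.sinh_lt_cosh x).le
    calc sinh x ≤ cosh x := h1
    _ ≤ 0.94 * x * cosh x := by nlinarith [Real.cosh_pos x]

lemma logcosh_one_le : log (cosh 1) ≤ 0.47 := by
  have hc : cosh 1 < 1.5432 := by
    rw [Real.cosh_eq]
    have h1 : Real.exp 1 < 2.7182818286 := Real.exp_one_lt_d9
    have h2 : Real.exp (-1 : ℝ) < 0.368 := by
      rw [Real.exp_neg]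
      rw [inv_lt_comm₀ (Real.exp_pos 1) (by norm_num)]
      calc (0.368 : ℝ)⁻¹ < 2.7182818283 := by norm_num
      _ < Real.exp 1 := Real.exp_one_gt_d9
    norm_num at *
    linarith
  have he : (1.5432 : ℝ) ≤ Real.exp 0.47 := by
    have h4 : Real.exp 0.47 = Real.exp 0.1175 ^ (4:ℕ) := by
      rw [← Real.exp_nat_mul]; norm_num
    have h5 : (1.1175 : ℝ) ≤ Real.exp 0.1175 := by
      have := Real.add_one_le_exp (0.1175 : ℝ); linarith
    rw [h4]
    calc (1.5432 : ℝ) ≤ 1.1175 ^ (4:ℕ) := by norm_num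
    _ ≤ Real.exp 0.1175 ^ (4:ℕ) := by
        exact pow_le_pow_left₀ (by norm_num) h5 4
  calc log (cosh 1) ≤ log (Real.exp 0.47) :=
        Real.log_le_log (Real.cosh_pos 1) (by linarith)
  _ = 0.47 := Real.log_exp _

lemma logcosh_le_numeric {x : ℝ} (hx : 1 ≤ |x|) : log (cosh x) ≤ 0.47 * x^2 := by
  have main : ∀ y : ℝ, 1 ≤ y → log (cosh y) ≤ 0.47 * y^2 := by
    intro y hy
    have key : 0 ≤ 0.47 * y^2 - log (cosh y) := by
      apply nonneg_of_deriv 1 (f' := fun x => 0.94 * x - sinh x / cosh x) ?_ ?_ ?_ hy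
      · intro z
        have : HasDerivAt (fun x : ℝ => 0.47 * x^2 - log (cosh x))
            (0.47 * (2*z^1) - sinh z / cosh z) z :=
          ((hasDerivAt_pow 2 z).const_mul 0.47).sub (hasDerivAt_logcosh z)
        convert this using 1; ring
      · have := logcosh_one_le
        norm_num
        linarith
      · intro z hz
        have := sinh_le_numeric hz
        have hc := Real.cosh_pos z
        rw [sub_nonneg, div_le_iff₀ hc]
        linarith
    linarith
  rcases le_total 0 x with hx0 | hx0
  · exact main x (by rwa [abs_of_nonneg hx0] at hx)
  · have := main (-x) (by rwa [abs_of_nonpos hx0] at hx)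
    rw [logcosh_even] at this
    nlinarith [this]


end Stmt9Calc

namespace Stmt9Aux

noncomputable def s (n : ℕ) : ℝ := (n : ℝ) ^ ((1 : ℝ)/4)
noncomputable def θf (h : ℝ) (n : ℕ) : ℝ := 1 + h / Real.sqrt n
noncomputable def gn (h : ℝ) (n : ℕ) (u : ℝ) : ℝ := phiDensity n (θf h n) (u / s n)
noncomputable def glim (h : ℝ) (u : ℝ) : ℝ := Real.exp (-(u ^ 4) / 12 + h * u ^ 2 / 2)

lemma s_nonneg (n : ℕ) : 0 ≤ s n := Real.rpow_nonneg (Nat.cast_nonneg n) _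

lemma s_pos {n : ℕ} (hn : 1 ≤ n) : 0 < s n :=
  Real.rpow_pos_of_pos (by exact_mod_cast hn) _

lemma s_sq (n : ℕ) : (s n)^2 = Real.sqrt n := by
  rw [s, ← Real.rpow_natCast ((n:ℝ) ^ ((1:ℝ)/4)) 2, ← Real.rpow_mul (Nat.cast_nonneg n),
    Real.sqrt_eq_rpow]
  norm_num

lemma s_four (n : ℕ) : (s n)^4 = (n : ℝ) := by
  rw [s, ← Real.rpow_natCast ((n:ℝ) ^ ((1:ℝ)/4)) 4, ← Real.rpow_mul (Nat.cast_nonneg n)]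
  norm_num

lemma gn_pos (h : ℝ) (n : ℕ) (u : ℝ) : 0 < gn h n u := Real.exp_pos _

/-- upper bound via the sextic estimate -/
lemma gn_le_up (h : ℝ) {n : ℕ} (hn : 1 ≤ n) (u : ℝ) :
    gn h n u ≤ Real.exp (θf h n * (h*u^2/2) - (θf h n)^4 * (u^4/12)
      + ((θf h n)^6 * (u^6/45)) * (Real.sqrt n)⁻¹) := by
  set t := s n with ht
  set θ := θf h n with hθ
  have htpos : 0 < t := s_pos hn
  have ht2 : t^2 = Real.sqrt n := s_sq n
  have ht4 : t^4 = (n:ℝ) := s_four n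
  have hsq : 0 < Real.sqrt n := by rw [← ht2]; positivity
  have hh : h = (θ - 1) * t^2 := by
    rw [hθ, θf, ht2]; field_simp; ring
  rw [gn, phiDensity, Real.exp_le_exp]
  have hL := logcosh_le_sextic (θ * (u / t))
  have hmul := mul_le_mul_of_nonneg_left hL (show (0:ℝ) ≤ (n:ℝ) by positivity)
  have hid : (n:ℝ) * ((θ*(u/t))^2/2 - (θ*(u/t))^4/12 + (θ*(u/t))^6/45)
      = Real.sqrt n * θ^2 * u^2 / 2 - θ^4*(u^4/12) + (θ^6*(u^6/45)) * (Real.sqrt n)⁻¹ := by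
    rw [← ht2, ← ht4]
    field_simp
  have hid2 : -((n:ℝ) * θ * (u/t)^2)/2 = -(Real.sqrt n * θ * u^2)/2 := by
    rw [← ht2, ← ht4]
    field_simp
  rw [hid2]
  have : Real.sqrt n * θ^2 * u^2/2 - Real.sqrt n * θ * u^2/2 = θ * (h*u^2/2) := by
    rw [hh, ← ht2]; ring
  nlinarith [hmul, hid]

/-- lower bound via the quartic estimate -/
lemma gn_ge_low (h : ℝ) {n : ℕ} (hn : 1 ≤ n) (u : ℝ) :
    Real.exp (θf h n * (h*u^2/2) - (θf h n)^4 * (u^4/12)) ≤ gn h n u := by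
  set t := s n with ht
  set θ := θf h n with hθ
  have htpos : 0 < t := s_pos hn
  have ht2 : t^2 = Real.sqrt n := s_sq n
  have ht4 : t^4 = (n:ℝ) := s_four n
  have hsq : 0 < Real.sqrt n := by rw [← ht2]; positivity
  have hh : h = (θ - 1) * t^2 := by
    rw [hθ, θf, ht2]; field_simp; ring
  rw [gn, phiDensity, Real.exp_le_exp]
  have hL := sq_quartic_le_logcosh (θ * (u / t))
  have hmul := mul_le_mul_of_nonneg_left hL (show (0:ℝ) ≤ (n:ℝ) by positivity)
  have hid : (n:ℝ) * ((θ*(u/t))^2/2 - (θ*(u/t))^4/12)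
      = Real.sqrt n * θ^2 * u^2 / 2 - θ^4*(u^4/12) := by
    rw [← ht2, ← ht4]
    field_simp
  have hid2 : -((n:ℝ) * θ * (u/t)^2)/2 = -(Real.sqrt n * θ * u^2)/2 := by
    rw [← ht2, ← ht4]
    field_simp
  rw [hid2]
  have : Real.sqrt n * θ^2 * u^2/2 - Real.sqrt n * θ * u^2/2 = θ * (h*u^2/2) := by
    rw [hh, ← ht2]; ring
  nlinarith [hmul, hid]

noncomputable def D (h : ℝ) (u : ℝ) : ℝ :=
  Real.exp ((|h|+1) * u^2 - (11/2880) * u^4) + Real.exp (-(1.1) * u^2)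

lemma θ_bounds {h : ℝ} {n : ℕ} (hn : 1 ≤ n) (hh : |h| ≤ Real.sqrt n / 50) :
    0.98 ≤ θf h n ∧ θf h n ≤ 1.02 := by
  have hsq : 0 < Real.sqrt n := Real.sqrt_pos.mpr (by exact_mod_cast hn)
  have h1 : |h / Real.sqrt n| ≤ 1/50 := by
    rw [abs_div, abs_of_pos hsq, div_le_iff₀ hsq]
    linarith
  rw [abs_le] at h1
  constructor <;> (rw [θf]) <;> [linarith [h1.1]; linarith [h1.2]]

set_option maxHeartbeats 1000000 in
lemma gn_dom (h : ℝ) {n : ℕ} (hn : 12100 ≤ n) (hh : |h| ≤ Real.sqrt n / 50) (u : ℝ) :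
    Real.exp (u^2) * gn h n u ≤ D h u := by
  have hn1 : 1 ≤ n := le_trans (by norm_num) hn
  have hsq : 0 < Real.sqrt n := Real.sqrt_pos.mpr (by exact_mod_cast hn1)
  have hsq110 : (110:ℝ) ≤ Real.sqrt n := by
    have h2 : ((110:ℝ))^2 ≤ (n:ℝ) := by
      have : (12100:ℝ) ≤ (n:ℝ) := by exact_mod_cast hn
      nlinarith
    calc (110:ℝ) = Real.sqrt (110^2) := by rw [Real.sqrt_sq]; norm_num
    _ ≤ Real.sqrt n := Real.sqrt_le_sqrt h2
  obtain ⟨hθl, hθu⟩ := θ_bounds hn1 hh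
  set t := s n with htdef
  set θ := θf h n with hθdef
  have htpos : 0 < t := s_pos hn1
  have ht2 : t^2 = Real.sqrt n := s_sq n
  have ht4 : t^4 = (n:ℝ) := s_four n
  have hθpos : (0:ℝ) < θ := by linarith
  rcases le_or_gt (|θ * (u/t)|) 1 with hx | hx
  · -- small x regime
    have hx2' : (θ * (u/t))^2 ≤ 1 := by
      rw [← sq_abs]; exact pow_le_one₀ (abs_nonneg _) hx
    have hid : (θ * (u/t))^2 * t^2 = θ^2 * u^2 := by field_simp
    have hx2 : θ^2 * u^2 ≤ Real.sqrt n := by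
      rw [← ht2]; nlinarith [sq_nonneg t]
    have hu6 : ((θ:ℝ)^6 * (u^6/45)) * (Real.sqrt n)⁻¹ ≤ θ^4 * (u^4/45) := by
      rw [mul_inv_le_iff₀ hsq]
      nlinarith [mul_le_mul_of_nonneg_left hx2 (show (0:ℝ) ≤ θ^4*u^4/45 by positivity)]
    have hup := gn_le_up h hn1 u
    have hth : θ * (h*u^2/2) ≤ |h| * u^2 := by
      have c1 : θ * h ≤ θ * |h| := mul_le_mul_of_nonneg_left (le_abs_self h) hθpos.le
      have c2 : θ * |h| ≤ 1.02 * |h| := mul_le_mul_of_nonneg_right hθu (abs_nonneg h)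
      nlinarith [mul_le_mul_of_nonneg_right (c1.trans c2) (sq_nonneg u), abs_nonneg h,
        sq_nonneg u]
    have hp4 : (0.98:ℝ)^4 ≤ θ^4 := pow_le_pow_left₀ (by norm_num) hθl 4
    have hq : (11/2880) * u^4 ≤ θ^4 * (u^4/12) - θ^4 * (u^4/45) := by
      nlinarith [mul_le_mul_of_nonneg_right hp4 (sq_nonneg (u^2))]
    have hfin : Real.exp (u^2) * gn h n u
        ≤ Real.exp ((|h|+1) * u^2 - (11/2880) * u^4) := by
      calc Real.exp (u^2) * gn h n u
          ≤ Real.exp (u^2) * Real.exp (θ * (h*u^2/2) - θ^4 * (u^4/12)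
            + (θ^6 * (u^6/45)) * (Real.sqrt n)⁻¹) :=
            mul_le_mul_of_nonneg_left hup (Real.exp_nonneg _)
      _ = Real.exp (u^2 + (θ * (h*u^2/2) - θ^4 * (u^4/12)
            + (θ^6 * (u^6/45)) * (Real.sqrt n)⁻¹)) := by rw [← Real.exp_add]
      _ ≤ Real.exp ((|h|+1) * u^2 - (11/2880) * u^4) := by
            rw [Real.exp_le_exp]; linarith [hu6]
    calc Real.exp (u^2) * gn h n u ≤ Real.exp ((|h|+1) * u^2 - (11/2880) * u^4) := hfin
    _ ≤ D h u := le_add_of_nonneg_right (Real.exp_nonneg _)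
  · -- large x regime
    have hxge : 1 ≤ |θ * (u/t)| := hx.le
    have hL := logcosh_le_numeric hxge
    have hmul := mul_le_mul_of_nonneg_left hL (show (0:ℝ) ≤ (n:ℝ) by positivity)
    have hA : (n:ℝ) * (0.47 * (θ*(u/t))^2) = 0.47 * (Real.sqrt n * θ^2 * u^2) := by
      rw [← ht2, ← ht4]; field_simp
    have hB : -((n:ℝ) * θ * (u/t)^2)/2 = -(Real.sqrt n * θ * u^2)/2 := by
      rw [← ht2, ← ht4]; field_simp
    have h107 : (107:ℝ) ≤ Real.sqrt n * θ := by
      calc (107:ℝ) ≤ 110 * 0.98 := by norm_num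
      _ ≤ Real.sqrt n * θ := mul_le_mul hsq110 hθl (by norm_num) hsq.le
    have hEn : -((n:ℝ) * θ * (u/t)^2)/2 + (n:ℝ) * Real.log (Real.cosh (θ*(u/t)))
        ≤ -(2.1) * u^2 := by
      rw [hB]
      have e3 : (107:ℝ) * u^2 ≤ Real.sqrt n * θ * u^2 :=
        mul_le_mul_of_nonneg_right h107 (sq_nonneg u)
      have e4 : (0:ℝ) ≤ Real.sqrt n * θ * u^2 := by positivity
      have key : 0.47 * (Real.sqrt n * θ^2 * u^2) - (Real.sqrt n * θ * u^2)/2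
          ≤ -(2.1) * u^2 := by
        have e1 : 0.47 * (Real.sqrt n * θ^2 * u^2) - Real.sqrt n * θ * u^2/2
            = (Real.sqrt n * θ * u^2) * (0.47 * θ - 0.5) := by ring
        have e2 : (0.47:ℝ) * θ - 0.5 ≤ -0.0206 := by linarith
        calc 0.47 * (Real.sqrt n * θ^2 * u^2) - (Real.sqrt n * θ * u^2)/2
            = (Real.sqrt n * θ * u^2) * (0.47 * θ - 0.5) := by ring
        _ ≤ (Real.sqrt n * θ * u^2) * (-0.0206) := mul_le_mul_of_nonneg_left e2 e4
        _ ≤ (107 * u^2) * (-0.0206) := mul_le_mul_of_nonpos_right e3 (by norm_num)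
        _ ≤ -(2.1) * u^2 := by nlinarith [sq_nonneg u]
      calc -(Real.sqrt n * θ * u^2)/2 + (n:ℝ) * Real.log (Real.cosh (θ*(u/t)))
          ≤ -(Real.sqrt n * θ * u^2)/2 + 0.47 * (Real.sqrt n * θ^2 * u^2) := by
            rw [← hA]; linarith [hmul]
      _ ≤ -(2.1) * u^2 := by linarith [key]
    have hD2 : Real.exp (u^2) * gn h n u ≤ Real.exp (-(1.1) * u^2) := by
      rw [gn, phiDensity, ← Real.exp_add, Real.exp_le_exp]
      linarith [hEn]
    calc Real.exp (u^2) * gn h n u ≤ Real.exp (-(1.1)*u^2) := hD2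
    _ ≤ D h u := le_add_of_nonneg_left (Real.exp_nonneg _)

lemma tendsto_sqrt_n : Tendsto (fun n : ℕ => Real.sqrt n) atTop atTop := by
  apply tendsto_atTop_atTop.2
  intro b
  refine ⟨⌈b⌉₊^2, fun n hn => ?_⟩
  have h1 : ((⌈b⌉₊:ℝ))^2 ≤ (n:ℝ) := by exact_mod_cast hn
  calc b ≤ (⌈b⌉₊:ℝ) := Nat.le_ceil b
  _ = Real.sqrt (((⌈b⌉₊:ℝ))^2) := by rw [Real.sqrt_sq (Nat.cast_nonneg _)]
  _ ≤ Real.sqrt n := Real.sqrt_le_sqrt h1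

lemma tendsto_θ (h : ℝ) : Tendsto (θf h) atTop (𝓝 1) := by
  have h0 : Tendsto (fun n : ℕ => h / Real.sqrt n) atTop (𝓝 0) := by
    simp_rw [div_eq_mul_inv]
    simpa using (tendsto_inv_atTop_zero.comp tendsto_sqrt_n).const_mul h
  have := tendsto_const_nhds.add h0 (f := fun _ : ℕ => (1:ℝ))
  show Tendsto (fun n : ℕ => 1 + h / Real.sqrt n) atTop (𝓝 1)
  simpa using this

lemma tendsto_gn (h u : ℝ) : Tendsto (fun n => gn h n u) atTop (𝓝 (glim h u)) := by
  have hθ := tendsto_θ h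
  have hlow : Tendsto (fun n => Real.exp (θf h n * (h*u^2/2) - (θf h n)^4 * (u^4/12)))
      atTop (𝓝 (glim h u)) := by
    have l1 : Tendsto (fun n => θf h n * (h*u^2/2) - (θf h n)^4 * (u^4/12)) atTop
        (𝓝 (1 * (h*u^2/2) - 1^4 * (u^4/12))) :=
      (hθ.mul_const _).sub ((hθ.pow 4).mul_const _)
    have := (Real.continuous_exp.tendsto _).comp l1
    simp only [Function.comp_def] at this
    convert this using 2
    rw [glim]; ring_nf
  have hup : Tendsto (fun n => Real.exp (θf h n * (h*u^2/2) - (θf h n)^4 * (u^4/12)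
      + ((θf h n)^6 * (u^6/45)) * (Real.sqrt n)⁻¹)) atTop (𝓝 (glim h u)) := by
    have l2 : Tendsto (fun n : ℕ => θf h n * (h*u^2/2) - (θf h n)^4 * (u^4/12)
        + ((θf h n)^6 * (u^6/45)) * (Real.sqrt n)⁻¹) atTop
        (𝓝 ((1 * (h*u^2/2) - 1^4 * (u^4/12)) + (1^6 * (u^6/45)) * 0)) :=
      ((hθ.mul_const _).sub ((hθ.pow 4).mul_const _)).add
        (((hθ.pow 6).mul_const _).mul (tendsto_inv_atTop_zero.comp tendsto_sqrt_n))
    have := (Real.continuous_exp.tendsto _).comp l2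
    simp only [Function.comp_def] at this
    convert this using 2
    rw [glim]; ring_nf
  refine tendsto_of_tendsto_of_tendsto_of_le_of_le' hlow hup ?_ ?_
  · filter_upwards [eventually_ge_atTop 1] with n hn
    exact gn_ge_low h hn u
  · filter_upwards [eventually_ge_atTop 1] with n hn
    exact gn_le_up h hn u

lemma int_aux (a c : ℝ) (hc : 0 < c) :
    Integrable (fun u : ℝ => Real.exp (a*u^2 - c*u^4)) := by
  apply Integrable.mono'
    (g := fun u : ℝ => Real.exp ((a+1)^2/(4*c)) * Real.exp (-(1:ℝ)*u^2))
  · exact (integrable_exp_neg_mul_sq one_pos).const_mul _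
  · apply Continuous.aestronglyMeasurable
    exact Real.continuous_exp.comp (by continuity)
  · refine ae_of_all _ fun u => ?_
    rw [Real.norm_eq_abs, abs_of_pos (Real.exp_pos _), ← Real.exp_add, Real.exp_le_exp]
    have key : (a+1)*u^2 - c*u^4 ≤ (a+1)^2/(4*c) := by
      rw [le_div_iff₀ (by positivity)]
      nlinarith [sq_nonneg (2*c*u^2 - (a+1))]
    linarith

lemma cont_gn (h : ℝ) (n : ℕ) : Continuous (gn h n) := by
  unfold gn phiDensity
  apply Real.continuous_exp.comp
  apply Continuous.add
  · fun_prop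
  · apply Continuous.mul continuous_const
    apply Continuous.log
    · fun_prop
    · intro x; exact (Real.cosh_pos _).ne'

lemma gn_nonneg (h : ℝ) (n : ℕ) (u : ℝ) : 0 ≤ gn h n u := (Real.exp_pos _).le

lemma int_D (h : ℝ) : Integrable (D h) := by
  unfold D
  apply Integrable.add
  · exact int_aux _ _ (by norm_num)
  · have := integrable_exp_neg_mul_sq (b := 1.1) (by norm_num)
    simpa [neg_mul] using this

lemma int_glim (h : ℝ) : Integrable (glim h) := by
  apply (int_aux (h/2) (1/12) (by norm_num)).congr
  refine ae_of_all _ fun u => ?_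
  show Real.exp ((h/2)*u^2 - (1/12)*u^4) = Real.exp (-(u ^ 4) / 12 + h * u ^ 2 / 2)
  exact congrArg Real.exp (by ring)

lemma pos_glim (h : ℝ) : 0 < ∫ u, glim h u := by
  rw [integral_pos_iff_support_of_nonneg (f := glim h)
    (fun u => (Real.exp_pos _).le) (int_glim h)]
  have hs : Function.support (glim h) = Set.univ :=
    Set.eq_univ_of_forall fun u => (Real.exp_pos _).ne'
  rw [hs]
  simp [Real.volume_univ]

lemma exp_Fcrit (h : ℝ) : Real.exp (Fcrit h) = ∫ u, glim h u :=
  Real.exp_log (pos_glim h)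

lemma gn_le_D (h : ℝ) {n : ℕ} (hn : 12100 ≤ n) (hh : |h| ≤ Real.sqrt n / 50) (u : ℝ) :
    gn h n u ≤ D h u := by
  have h1 := gn_dom h hn hh u
  nlinarith [Real.one_le_exp (sq_nonneg u), gn_nonneg h n u]

lemma int_gn (h : ℝ) {n : ℕ} (hn : 12100 ≤ n) (hh : |h| ≤ Real.sqrt n / 50) :
    Integrable (gn h n) := by
  apply (int_D h).mono' (cont_gn h n).aestronglyMeasurable
  refine ae_of_all _ fun u => ?_
  rw [Real.norm_eq_abs, abs_of_nonneg (gn_nonneg h n u)]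
  exact gn_le_D h hn hh u

lemma pos_int_gn (h : ℝ) {n : ℕ} (hn : 12100 ≤ n) (hh : |h| ≤ Real.sqrt n / 50) :
    0 < ∫ u, gn h n u := by
  rw [integral_pos_iff_support_of_nonneg (gn_nonneg h n) (int_gn h hn hh)]
  have hs : Function.support (gn h n) = Set.univ :=
    Set.eq_univ_of_forall fun u => (Real.exp_pos _).ne'
  rw [hs]
  simp [Real.volume_univ]

lemma hev (h : ℝ) : ∀ᶠ n : ℕ in atTop, 12100 ≤ n ∧ |h| ≤ Real.sqrt n / 50 := by
  filter_upwards [eventually_ge_atTop 12100,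
    tendsto_sqrt_n.eventually_ge_atTop (50 * |h|)] with n h1 h2
  exact ⟨h1, by linarith⟩

lemma tendsto_integral_gn (h : ℝ) (f : ℝ → ℝ) (hf : Continuous f) (B : ℝ)
    (hB : ∀ u, |f u| ≤ B * Real.exp (u^2)) :
    Tendsto (fun n => ∫ u, f u * gn h n u) atTop (𝓝 (∫ u, f u * glim h u)) := by
  have hB0 : 0 ≤ B := by
    have h0 := hB 0
    simp at h0
    linarith [abs_nonneg (f 0)]
  apply tendsto_integral_filter_of_dominated_convergence (bound := fun u => B * D h u)
  · exact Eventually.of_forall fun n => (hf.mul (cont_gn h n)).aestronglyMeasurable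
  · filter_upwards [hev h] with n hn
    refine ae_of_all _ fun u => ?_
    rw [Real.norm_eq_abs, abs_mul, abs_of_nonneg (gn_nonneg h n u)]
    calc |f u| * gn h n u ≤ (B * Real.exp (u^2)) * gn h n u :=
          mul_le_mul_of_nonneg_right (hB u) (gn_nonneg h n u)
    _ = B * (Real.exp (u^2) * gn h n u) := by ring
    _ ≤ B * D h u := mul_le_mul_of_nonneg_left (gn_dom h hn.1 hn.2 u) hB0
  · exact (int_D h).const_mul B
  · exact ae_of_all _ fun u => (tendsto_gn h u).const_mul (f u)

lemma integral_H (h : ℝ) (f : ℝ → ℝ) :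
    ∫ u, f u ∂ Hmeasure h = (∫ u, glim h u)⁻¹ * ∫ u, f u * glim h u := by
  have hdens : Continuous fun u : ℝ => Real.exp (-(u ^ 4) / 12 + h * u ^ 2 / 2 - Fcrit h) := by
    fun_prop
  have hmeas : Measurable fun u : ℝ =>
      (Real.exp (-(u ^ 4) / 12 + h * u ^ 2 / 2 - Fcrit h)).toNNReal :=
    (continuous_real_toNNReal.comp hdens).measurable
  have hH : Hmeasure h = volume.withDensity fun u =>
      ((Real.exp (-(u ^ 4) / 12 + h * u ^ 2 / 2 - Fcrit h)).toNNReal : ℝ≥0∞) := rfl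
  rw [hH, integral_withDensity_eq_integral_smul hmeas]
  have : (fun u => (Real.exp (-(u ^ 4) / 12 + h * u ^ 2 / 2 - Fcrit h)).toNNReal • f u)
      = fun u => (Real.exp (Fcrit h))⁻¹ * (f u * glim h u) := by
    funext u
    rw [NNReal.smul_def, Real.coe_toNNReal _ (Real.exp_pos _).le, Real.exp_sub, glim]
    rw [div_eq_mul_inv]
    ring
  rw [this, integral_const_mul, exp_Fcrit]

lemma integral_phi_eq (h : ℝ) {n : ℕ} (hn : 12100 ≤ n) (hh : |h| ≤ Real.sqrt n / 50)
    (f : ℝ → ℝ) :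
    ∫ φ, f (s n * φ) ∂ phiMeasure n (θf h n)
      = (∫ u, gn h n u)⁻¹ * ∫ u, f u * gn h n u := by
  have hn1 : 1 ≤ n := le_trans (by norm_num) hn
  have hs := s_pos hn1
  have hρ_eq : ∀ φ, phiDensity n (θf h n) φ = gn h n (s n * φ) := by
    intro φ
    rw [gn, mul_div_cancel_left₀ _ hs.ne']
  have hρ_int : Integrable (fun φ => phiDensity n (θf h n) φ) := by
    have := (int_gn h hn hh).comp_mul_left' hs.ne'
    exact this.congr (ae_of_all _ fun φ => (hρ_eq φ).symm)
  -- total mass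
  have hZ : phiUnnorm n (θf h n) Set.univ
      = ENNReal.ofReal (∫ φ, phiDensity n (θf h n) φ) := by
    rw [phiUnnorm, withDensity_apply _ MeasurableSet.univ, Measure.restrict_univ,
      ← ofReal_integral_eq_lintegral_ofReal hρ_int
        (ae_of_all _ fun φ => (Real.exp_pos _).le)]
  -- density integral identity
  have hmeas : Measurable fun φ => (phiDensity n (θf h n) φ).toNNReal := by
    apply Continuous.measurable
    apply continuous_real_toNNReal.comp
    exact Continuous.congr ((cont_gn h n).comp (continuous_const.mul continuous_id))
      (fun φ => (hρ_eq φ).symm)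
  have hwd : phiUnnorm n (θf h n) = volume.withDensity fun φ =>
      ((phiDensity n (θf h n) φ).toNNReal : ℝ≥0∞) := rfl
  have hInt1 : ∫ φ, f (s n * φ) ∂ phiUnnorm n (θf h n)
      = |(s n)⁻¹| • ∫ u, f u * gn h n u := by
    rw [hwd, integral_withDensity_eq_integral_smul hmeas]
    have : (fun φ => (phiDensity n (θf h n) φ).toNNReal • f (s n * φ))
        = fun φ => (fun u => f u * gn h n u) (s n * φ) := by
      funext φ
      rw [NNReal.smul_def, Real.coe_toNNReal (phiDensity n (θf h n) φ)
        (show 0 ≤ phiDensity n (θf h n) φ from (Real.exp_pos _).le), hρ_eq φ]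
      simp [mul_comm]
    rw [this, Measure.integral_comp_mul_left (fun u => f u * gn h n u) (s n)]
  have hInt2 : ∫ φ, phiDensity n (θf h n) φ = |(s n)⁻¹| • ∫ u, gn h n u := by
    have : (fun φ => phiDensity n (θf h n) φ) = fun φ => gn h n (s n * φ) := funext hρ_eq
    rw [this, Measure.integral_comp_mul_left (gn h n) (s n)]
  rw [phiMeasure, integral_smul_measure, hZ, ENNReal.toReal_inv,
    ENNReal.toReal_ofReal (show 0 ≤ ∫ φ, phiDensity n (θf h n) φ from
      integral_nonneg fun φ => (Real.exp_pos _).le), hInt1, hInt2]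
  have hpos := pos_int_gn h hn hh
  have hspos : (0:ℝ) < |(s n)⁻¹| := by
    rw [abs_of_pos (inv_pos.mpr hs)]; exact inv_pos.mpr hs
  rw [smul_eq_mul, smul_eq_mul, smul_eq_mul, mul_inv]
  field_simp

lemma master (h : ℝ) (f : ℝ → ℝ) (hf : Continuous f) (B : ℝ)
    (hB : ∀ u, |f u| ≤ B * Real.exp (u^2)) :
    Tendsto (fun n : ℕ => ∫ φ, f (s n * φ) ∂ phiMeasure n (θf h n)) atTop
      (𝓝 (∫ u, f u ∂ Hmeasure h)) := by
  rw [integral_H h f]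
  have h1 := tendsto_integral_gn h f hf B hB
  have h2 := tendsto_integral_gn h (fun _ => 1) continuous_const 1
    (fun u => by simpa using Real.one_le_exp (sq_nonneg u))
  simp only [one_mul] at h2
  have hpos := pos_glim h
  have hmul := (h2.inv₀ hpos.ne').mul h1
  apply hmul.congr'
  filter_upwards [hev h] with n hn
  exact (integral_phi_eq h hn.1 hn.2 f).symm

end Stmt9Aux

theorem stmt9 (h : ℝ) :
    (∀ f : BoundedContinuousFunction ℝ ℝ,
      Tendsto (fun n : ℕ =>
          ∫ φ, f ((n : ℝ) ^ ((1 : ℝ) / 4) * φ) ∂ phiMeasure n (1 + h / Real.sqrt (n : ℝ)))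
        atTop (nhds (∫ u, f u ∂ Hmeasure h))) ∧
    (∀ k : ℕ,
      Tendsto (fun n : ℕ =>
          ∫ φ, ((n : ℝ) ^ ((1 : ℝ) / 4) * φ) ^ k ∂ phiMeasure n (1 + h / Real.sqrt (n : ℝ)))
        atTop (nhds (∫ u, u ^ k ∂ Hmeasure h))) := by
  constructor
  · intro f
    have hB : ∀ u : ℝ, |f u| ≤ ‖f‖ * Real.exp (u^2) := by
      intro u
      calc |f u| = ‖f u‖ := (Real.norm_eq_abs _).symm
      _ ≤ ‖f‖ := BoundedContinuousFunction.norm_coe_le_norm f u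
      _ ≤ ‖f‖ * Real.exp (u^2) := by
          nlinarith [Real.one_le_exp (sq_nonneg u), norm_nonneg f]
    have := Stmt9Aux.master h f f.continuous ‖f‖ hB
    simpa [Stmt9Aux.s, Stmt9Aux.θf] using this
  · intro k
    have hB : ∀ u : ℝ, |u ^ k| ≤ (k.factorial : ℝ) * Real.exp (u^2) := by
      intro u
      have hfac : (1:ℝ) ≤ (k.factorial : ℝ) := by exact_mod_cast k.factorial_pos
      have hexp := Real.one_le_exp (sq_nonneg u)
      rcases le_total (|u|) 1 with hu | hu
      · calc |u ^ k| = |u| ^ k := abs_pow u k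
        _ ≤ 1 := pow_le_one₀ (abs_nonneg u) hu
        _ ≤ (k.factorial : ℝ) * Real.exp (u^2) := by nlinarith
      · have h1 : |u| ^ k ≤ |u| ^ (2*k) :=
          pow_le_pow_right₀ hu (by omega)
        have h2 : |u| ^ (2*k) = (u^2) ^ k := by
          rw [pow_mul, sq_abs]
        have h3 : (u^2) ^ k ≤ (k.factorial : ℝ) * Real.exp (u^2) := by
          have := Real.pow_div_factorial_le_exp (u^2) (sq_nonneg u) k
          rw [div_le_iff₀ (show (0:ℝ) < (k.factorial:ℝ) from Nat.cast_pos.mpr k.factorial_pos)] at this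
          linarith [this]
        calc |u ^ k| = |u| ^ k := abs_pow u k
        _ ≤ (u^2) ^ k := by rw [← h2]; exact h1
        _ ≤ _ := h3
    have := Stmt9Aux.master h (fun u => u ^ k) (continuous_pow k) (k.factorial : ℝ) hB
    simpa [Stmt9Aux.s, Stmt9Aux.θf] using this
end
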